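/- arXiv:1608.08474 — 6 statements merged into one kernel-verified Lean document; each statement's English description precedes it below -/
import Mathlib

section
/- Let 𝒳 be a finite nonempty set and let p, q be probability mass functions on 𝒳 such that q(x) > 0 for all x ∈ 𝒳. Then D(p‖q) ≤ log₂(1/μ_q) · √(2 ln 2) · √(D(q‖p)), where μ_q = min_{x∈𝒳} q(x). (Appendix Lemma 6 of the paper.) -/
/-!
On the points where `p x ≥ q x` the likelihood ratio `r = p x / q x` lies in `[1, 1/μ]`, and
`1/μ ≥ 2` as soon as there are two points. The chord of the convex function `r log r` over
`[1, 1/μ]` then gives `p log (p/q) ≤ 2 log (1/μ) (p - q)` there, while the remaining terms of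
`D(p‖q)` are nonpositive; so `D(p‖q) ≤ 2 log (1/μ) · TV(p, q)`. Pinsker's inequality
`2 TV(p, q)² ≤ D(q‖p)` (nats), proved by coarse-graining to the two-point partition
`{p ≥ q}, {p < q}` with the log-sum inequality and a derivative argument for the binary case,
finishes the proof after converting to base 2. If some `p x = 0` the right-hand side is `⊤`.
-/

open scoped ENNReal BigOperators

attribute [local instance] Classical.propDecidable

/-- Kullback–Leibler divergence (base 2) between two pmfs on a finite set,
valued in `[0, +∞]`, with `D(p‖q) = +∞` when `p` is not absolutely continuous
with respect to `q`, and the convention `0 · log(0/a) = 0`. -/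
noncomputable def klDiv {α : Type*} [Fintype α] (p q : α → ℝ) : ℝ≥0∞ :=
  if ∀ x, q x = 0 → p x = 0 then
    ENNReal.ofReal (∑ x, p x * Real.logb 2 (p x / q x))
  else ⊤

/-- A probability mass function on a finite set. -/
def IsPMF {α : Type*} [Fintype α] (p : α → ℝ) : Prop :=
  (∀ x, 0 ≤ p x) ∧ ∑ x, p x = 1

open Real Finset Set

lemma le_of_hasDerivAt_of_sub_mul_nonneg {f f' : ℝ → ℝ} {a b : ℝ}
    (hf : ∀ x ∈ uIcc a b, HasDerivAt f (f' x) x)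
    (hsign : ∀ x ∈ uIcc a b, 0 ≤ (x - a) * f' x) : f a ≤ f b := by
  have hcont : ContinuousOn f (uIcc a b) := fun x hx => (hf x hx).continuousAt.continuousWithinAt
  have hderiv : ∀ x ∈ interior (uIcc a b), HasDerivWithinAt f (f' x) (interior (uIcc a b)) x :=
    fun x hx => (hf x (interior_subset hx)).hasDerivWithinAt
  rcases le_total a b with hab | hba
  · rw [uIcc_of_le hab] at hcont hderiv hsign
    refine monotoneOn_of_hasDerivWithinAt_nonneg (convex_Icc a b) hcont hderiv (fun x hx => ?_)
      (left_mem_Icc.2 hab) (right_mem_Icc.2 hab) hab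
    rw [interior_Icc] at hx
    exact nonneg_of_mul_nonneg_right (hsign x (Ioo_subset_Icc_self hx)) (sub_pos.2 hx.1)
  · rw [uIcc_of_ge hba] at hcont hderiv hsign
    refine antitoneOn_of_hasDerivWithinAt_nonpos (convex_Icc b a) hcont hderiv (fun x hx => ?_)
      (left_mem_Icc.2 hba) (right_mem_Icc.2 hba) hba
    rw [interior_Icc] at hx
    exact nonpos_of_mul_nonneg_right (hsign x (Ioo_subset_Icc_self hx)) (sub_neg.2 hx.2)

lemma two_mul_sq_sub_le_binary_kl {a b : ℝ} (ha0 : 0 < a) (ha1 : a < 1) (hb0 : 0 < b)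
    (hb1 : b < 1) :
    2 * (a - b) ^ 2 ≤ a * log (a / b) + (1 - a) * log ((1 - a) / (1 - b)) := by
  have hf : ∀ x ∈ Ioo (0 : ℝ) 1,
      HasDerivAt (fun x => -(a * log x) - (1 - a) * log (1 - x) - 2 * (a - x) ^ 2)
        (-(a / x) + (1 - a) / (1 - x) + 4 * (a - x)) x := by
    intro x hx
    have hlog1 := ((hasDerivAt_id' x).const_sub 1).log (sub_pos.2 hx.2).ne'
    have := (((hasDerivAt_log hx.1.ne').const_mul a).neg.sub (hlog1.const_mul (1 - a))).sub
      ((((hasDerivAt_id' x).const_sub a).pow 2).const_mul 2)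
    exact this.congr_deriv (by field_simp; ring)
  have hsign : ∀ x ∈ Ioo (0 : ℝ) 1,
      (x - a) * (-(a / x) + (1 - a) / (1 - x) + 4 * (a - x)) =
        (x - a) ^ 2 * (2 * x - 1) ^ 2 / (x * (1 - x)) := by
    intro x hx
    have := hx.1.ne'
    have := (sub_pos.2 hx.2).ne'
    field_simp
    ring
  have hsub := ordConnected_Ioo.uIcc_subset ⟨ha0, ha1⟩ ⟨hb0, hb1⟩
  have key := le_of_hasDerivAt_of_sub_mul_nonneg (fun x hx => hf x (hsub hx)) fun x hx => by
    rw [hsign x (hsub hx)]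
    have := hsub hx
    have : 0 < x * (1 - x) := mul_pos this.1 (sub_pos.2 this.2)
    positivity
  rw [log_div ha0.ne' hb0.ne', log_div (sub_pos.2 ha1).ne' (sub_pos.2 hb1).ne']
  linarith

lemma mul_log_le_two_mul_log_mul_sub_one {r R : ℝ} (hr : 1 ≤ r) (hrR : r ≤ R) (hR : 2 ≤ R) :
    r * log r ≤ 2 * log R * (r - 1) := by
  rcases hr.eq_or_lt with rfl | hr
  · simp
  have hsecant := convexOn_mul_log.secant_mono (a := 1) (by simp) (by simp; linarith)
    (by simp; linarith) hr.ne' (by linarith) hrR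
  simp only [log_one, mul_zero, sub_zero] at hsecant
  rw [div_le_div_iff₀ (by linarith) (by linarith)] at hsecant
  have hR2 : R * (log R * (r - 1)) ≤ 2 * (R - 1) * (log R * (r - 1)) :=
    mul_le_mul_of_nonneg_right (by linarith) (mul_nonneg (log_nonneg (by linarith)) (by linarith))
  refine le_of_mul_le_mul_right ?_ (show 0 < R - 1 by linarith)
  linarith

lemma mul_log_div_le_two_mul_log_inv_mul_posPart {a b μ : ℝ} (ha : 0 ≤ a) (ha1 : a ≤ 1)
    (hμ : 0 < μ) (hμb : μ ≤ b) (hμ2 : μ ≤ 1 / 2) :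
    a * log (a / b) ≤ 2 * log μ⁻¹ * (a - b)⁺ := by
  have hb : 0 < b := hμ.trans_le hμb
  rcases le_or_gt b a with hba | hab
  · rw [posPart_eq_self.2 (sub_nonneg.2 hba)]
    have hratio : a / b ≤ μ⁻¹ := by
      rw [div_le_iff₀ hb, ← div_eq_inv_mul, le_div_iff₀ hμ]
      nlinarith
    have hchord := mul_log_le_two_mul_log_mul_sub_one ((one_le_div hb).2 hba) hratio
      (by rw [le_inv_comm₀ (by norm_num) hμ]; linarith)
    have := mul_le_mul_of_nonneg_left hchord hb.le
    calc a * log (a / b) = b * (a / b * log (a / b)) := by field_simp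
      _ ≤ b * (2 * log μ⁻¹ * (a / b - 1)) := this
      _ = 2 * log μ⁻¹ * (a - b) := by field_simp
  · rw [posPart_eq_zero.2 (sub_nonpos.2 hab.le), mul_zero]
    exact mul_nonpos_of_nonneg_of_nonpos ha
      (log_nonpos (div_nonneg ha hb.le) ((div_le_one hb).2 hab.le))

lemma mul_log_add_sub_le_mul_log_div {a b c : ℝ} (ha : 0 < a) (hb : 0 < b) (hc : 0 < c) :
    a * log c + a - c * b ≤ a * log (a / b) := by
  have h := log_le_sub_one_of_pos (show 0 < c * b / a by positivity)
  rw [log_div (by positivity) ha.ne', log_mul hc.ne' hb.ne'] at h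
  rw [log_div ha.ne' hb.ne']
  have : a * (c * b / a - 1) = c * b - a := by field_simp
  nlinarith

section

variable {ι : Type*}

lemma sum_mul_log_div_le_two_mul_log_inv_mul_sum_posPart (s : Finset ι)
    {p q : ι → ℝ} {μ : ℝ} (hp : ∀ x ∈ s, 0 ≤ p x) (hp1 : ∀ x ∈ s, p x ≤ 1)
    (hμ : 0 < μ) (hμq : ∀ x ∈ s, μ ≤ q x) (hμ2 : μ ≤ 1 / 2) :
    ∑ x ∈ s, p x * log (p x / q x) ≤ 2 * log μ⁻¹ * ∑ x ∈ s, (p x - q x)⁺ := by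
  rw [mul_sum]
  exact sum_le_sum fun x hx =>
    mul_log_div_le_two_mul_log_inv_mul_posPart (hp x hx) (hp1 x hx) hμ (hμq x hx) hμ2

lemma sum_mul_log_sum_div_sum_le (s : Finset ι) {p q : ι → ℝ}
    (hp : ∀ x ∈ s, 0 < p x) (hq : ∀ x ∈ s, 0 < q x) :
    (∑ x ∈ s, q x) * log ((∑ x ∈ s, q x) / ∑ x ∈ s, p x) ≤ ∑ x ∈ s, q x * log (q x / p x) := by
  rcases s.eq_empty_or_nonempty with rfl | hs
  · simp
  set c := (∑ x ∈ s, q x) / ∑ x ∈ s, p x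
  have hP : 0 < ∑ x ∈ s, p x := sum_pos hp hs
  have hc : 0 < c := div_pos (sum_pos hq hs) hP
  calc (∑ x ∈ s, q x) * log c = ∑ x ∈ s, (q x * log c + q x - c * p x) := by
        rw [sum_sub_distrib, sum_add_distrib, ← sum_mul, ← mul_sum, div_mul_cancel₀ _ hP.ne']
        ring
    _ ≤ ∑ x ∈ s, q x * log (q x / p x) :=
        sum_le_sum fun x hx => mul_log_add_sub_le_mul_log_div (hq x hx) (hp x hx) hc

lemma sum_mul_log_div_nonneg [Fintype ι] {p q : ι → ℝ}
    (hp : ∀ x, 0 < p x) (hq : ∀ x, 0 < q x) (hp1 : ∑ x, p x = 1) (hq1 : ∑ x, q x = 1) :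
    0 ≤ ∑ x, q x * log (q x / p x) := by
  simpa [hp1, hq1] using sum_mul_log_sum_div_sum_le univ (fun x _ => hp x) (fun x _ => hq x)

lemma sum_posPart_sub_eq (s : Finset ι) (p q : ι → ℝ) :
    ∑ x ∈ s, (p x - q x)⁺ = ∑ x ∈ s with q x ≤ p x, p x - ∑ x ∈ s with q x ≤ p x, q x := by
  rw [← sum_sub_distrib, sum_filter]
  refine sum_congr rfl fun x _ => ?_
  split_ifs with h
  · exact posPart_eq_self.2 (sub_nonneg.2 h)
  · exact posPart_eq_zero.2 (sub_nonpos.2 (not_le.1 h).le)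

theorem two_mul_sq_sum_posPart_le_sum_mul_log_div [Fintype ι] {p q : ι → ℝ}
    (hp : ∀ x, 0 < p x) (hq : ∀ x, 0 < q x) (hp1 : ∑ x, p x = 1) (hq1 : ∑ x, q x = 1) :
    2 * (∑ x, (p x - q x)⁺) ^ 2 ≤ ∑ x, q x * log (q x / p x) := by
  set S : Finset ι := {x | q x ≤ p x}
  set a := ∑ x ∈ S, q x
  set b := ∑ x ∈ S, p x
  have hqc : ∑ x ∈ Sᶜ, q x = 1 - a := by rw [← hq1, ← sum_compl_add_sum S]; ring
  have hpc : ∑ x ∈ Sᶜ, p x = 1 - b := by rw [← hp1, ← sum_compl_add_sum S]; ring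
  have hbinary : a * log (a / b) + (1 - a) * log ((1 - a) / (1 - b)) ≤
      ∑ x, q x * log (q x / p x) := by
    rw [← sum_add_sum_compl S, ← hqc, ← hpc]
    exact add_le_add (sum_mul_log_sum_div_sum_le S (fun x _ => hp x) fun x _ => hq x)
      (sum_mul_log_sum_div_sum_le Sᶜ (fun x _ => hp x) fun x _ => hq x)
  rw [sum_posPart_sub_eq]
  change 2 * (b - a) ^ 2 ≤ _
  rcases eq_or_ne a b with hab | hab
  · rw [← hab] at hbinary ⊢
    simpa using hbinary
  have hS : S.Nonempty := by
    rw [Finset.nonempty_iff_ne_empty]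
    rintro h
    simp [a, b, h] at hab
  have hSc : Sᶜ.Nonempty := by
    rw [Finset.nonempty_iff_ne_empty]
    rintro h
    rw [h, sum_empty] at hqc hpc
    exact hab (by linarith)
  have ha0 : 0 < a := sum_pos (fun x _ => hq x) hS
  have hb0 : 0 < b := sum_pos (fun x _ => hp x) hS
  have ha1 : 0 < 1 - a := hqc ▸ sum_pos (fun x _ => hq x) hSc
  have hb1 : 0 < 1 - b := hpc ▸ sum_pos (fun x _ => hp x) hSc
  calc 2 * (b - a) ^ 2 = 2 * (a - b) ^ 2 := by ring
    _ ≤ _ := two_mul_sq_sub_le_binary_kl ha0 (by linarith) hb0 (by linarith)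
    _ ≤ _ := hbinary

lemma sum_mul_log_div_le_log_inv_mul_sqrt [Fintype ι] {p q : ι → ℝ} {μ : ℝ}
    (hp : ∀ x, 0 < p x) (hp1 : ∑ x, p x = 1) (hq1 : ∑ x, q x = 1)
    (hμ : 0 < μ) (hμq : ∀ x, μ ≤ q x) (hμ2 : μ ≤ 1 / 2) :
    ∑ x, p x * log (p x / q x) ≤ log μ⁻¹ * √(2 * ∑ x, q x * log (q x / p x)) := by
  set T := ∑ x, (p x - q x)⁺
  have hp_le_one : ∀ x, p x ≤ 1 := fun x =>
    hp1 ▸ single_le_sum (fun i _ => (hp i).le) (mem_univ x)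
  have hA := sum_mul_log_div_le_two_mul_log_inv_mul_sum_posPart univ (fun x _ => (hp x).le)
    (fun x _ => hp_le_one x) hμ (fun x _ => hμq x) hμ2
  have hB := two_mul_sq_sum_posPart_le_sum_mul_log_div hp (fun x => hμ.trans_le (hμq x)) hp1 hq1
  have hT : 2 * T ≤ √(2 * ∑ x, q x * log (q x / p x)) :=
    le_sqrt_of_sq_le (by nlinarith)
  have hlogμ : 0 ≤ log μ⁻¹ := log_nonneg (one_le_inv_iff₀.2 ⟨hμ, by linarith⟩)
  calc _ ≤ 2 * log μ⁻¹ * T := hA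
    _ = log μ⁻¹ * (2 * T) := by ring
    _ ≤ _ := mul_le_mul_of_nonneg_left hT hlogμ

lemma sum_mul_logb (s : Finset ι) (b : ℝ) (f g : ι → ℝ) :
    ∑ x ∈ s, f x * logb b (g x) = (∑ x ∈ s, f x * log (g x)) / log b := by
  simp only [logb, mul_div_assoc, sum_div]

lemma sum_mul_logb_div_le_logb_inv_mul_sqrt [Fintype ι] {p q : ι → ℝ} {μ : ℝ}
    (hp : ∀ x, 0 < p x) (hp1 : ∑ x, p x = 1) (hq1 : ∑ x, q x = 1)
    (hμ : 0 < μ) (hμq : ∀ x, μ ≤ q x) (hμ2 : μ ≤ 1 / 2) :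
    ∑ x, p x * logb 2 (p x / q x) ≤
      logb 2 μ⁻¹ * √(2 * log 2) * √(∑ x, q x * logb 2 (q x / p x)) := by
  have hlog2 : 0 < log 2 := log_pos one_lt_two
  have hsqrt : √(2 * log 2) * √((∑ x, q x * log (q x / p x)) / log 2) =
      √(2 * ∑ x, q x * log (q x / p x)) := by
    rw [← sqrt_mul (by positivity)]
    field_simp
  rw [sum_mul_logb, sum_mul_logb, logb, mul_assoc, hsqrt, div_mul_eq_mul_div]
  exact div_le_div_of_nonneg_right
    (sum_mul_log_div_le_log_inv_mul_sqrt hp hp1 hq1 hμ hμq hμ2) hlog2.le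

end

namespace IsPMF

variable {α : Type*} [Fintype α] {p q : α → ℝ}

lemma eq_of_subsingleton [Subsingleton α] (hp : IsPMF p) (hq : IsPMF q) : p = q := by
  funext x
  rw [← Fintype.sum_subsingleton p x, ← Fintype.sum_subsingleton q x, hp.2, hq.2]

lemma card_mul_le_one (hq : IsPMF q) {μ : ℝ} (hμq : ∀ x, μ ≤ q x) :
    Fintype.card α * μ ≤ 1 := by
  rw [← hq.2, ← nsmul_eq_mul, ← card_univ, ← sum_const]
  exact sum_le_sum fun x _ => hμq x

end IsPMF

lemma klDiv_self {α : Type*} [Fintype α] (p : α → ℝ) : klDiv p p = 0 := by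
  rw [klDiv, if_pos fun _ h => h, ENNReal.ofReal_eq_zero]
  refine (sum_eq_zero fun x _ => ?_).le
  rcases eq_or_ne (p x) 0 with h | h <;> simp [h]

lemma klDiv_of_ne_zero {α : Type*} [Fintype α] {p q : α → ℝ} (hq : ∀ x, q x ≠ 0) :
    klDiv p q = ENNReal.ofReal (∑ x, p x * logb 2 (p x / q x)) :=
  if_pos fun x hx => absurd hx (hq x)

lemma klDiv_eq_top {α : Type*} [Fintype α] {p q : α → ℝ} {x : α} (hq : q x = 0) (hp : p x ≠ 0) :
    klDiv p q = ⊤ :=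
  if_neg fun h => hp (h x hq)

/-- Appendix Lemma 6: `D(p‖q) ≤ log₂(1/μ_q) · √(2 ln 2) · √(D(q‖p))`
where `μ_q = min_x q(x) > 0`. -/
theorem kl_le_log_mul_sqrt_kl_symm {𝒳 : Type*} [Fintype 𝒳] [Nonempty 𝒳]
    (p q : 𝒳 → ℝ) (hp : IsPMF p) (hq : IsPMF q) (hqpos : ∀ x, 0 < q x) :
    klDiv p q ≤
      ENNReal.ofReal
          (Real.logb 2 ((Finset.univ.inf' Finset.univ_nonempty q)⁻¹) *
            Real.sqrt (2 * Real.log 2)) *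
        (klDiv q p) ^ (1 / 2 : ℝ) := by
  set μ := univ.inf' univ_nonempty q
  have hμq : ∀ x, μ ≤ q x := fun x => inf'_le q (mem_univ x)
  have hμ : 0 < μ := (lt_inf'_iff _).2 fun x _ => hqpos x
  rcases subsingleton_or_nontrivial 𝒳 with h𝒳 | h𝒳
  · rw [hp.eq_of_subsingleton hq, klDiv_self]
    exact bot_le
  have hμ2 : μ ≤ 1 / 2 := by
    have hcard : (2 : ℝ) ≤ Fintype.card 𝒳 := by exact_mod_cast Fintype.one_lt_card
    nlinarith [hq.card_mul_le_one hμq]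
  have hconst : 0 < logb 2 μ⁻¹ * √(2 * log 2) :=
    mul_pos (logb_pos one_lt_two (by rw [one_lt_inv_iff₀]; exact ⟨hμ, by linarith⟩))
      (sqrt_pos.2 (by positivity))
  by_cases hp0 : ∃ x, p x = 0
  · obtain ⟨x, hx⟩ := hp0
    rw [klDiv_eq_top hx (hqpos x).ne', ENNReal.top_rpow_of_pos (by norm_num),
      ENNReal.mul_top (ENNReal.ofReal_pos.2 hconst).ne']
    exact le_top
  have hppos : ∀ x, 0 < p x := fun x => (hp.1 x).lt_of_ne fun h => hp0 ⟨x, h.symm⟩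
  have hgibbs : 0 ≤ ∑ x, q x * logb 2 (q x / p x) := by
    rw [sum_mul_logb]
    exact div_nonneg (sum_mul_log_div_nonneg hppos hqpos hp.2 hq.2) (log_nonneg one_le_two)
  rw [klDiv_of_ne_zero fun x => (hqpos x).ne', klDiv_of_ne_zero fun x => (hppos x).ne',
    ENNReal.ofReal_rpow_of_nonneg hgibbs (by norm_num), ← ENNReal.ofReal_mul hconst.le,
    ← sqrt_eq_rpow]
  exact ENNReal.ofReal_le_ofReal
    (sum_mul_logb_div_le_logb_inv_mul_sqrt hppos hp.2 hq.2 hμ hμq hμ2)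
end

section
/- Let p, q, r be pmfs on a finite nonempty set 𝒳 with q(x) > 0 for all x ∈ 𝒳. Then D(p‖q) ≤ log₂(1/μ_q) · √(2 ln 2) · [ √(min(D(p‖r), D(r‖p))) + √(min(D(q‖r), D(r‖q))) ], where μ_q = min_{x∈𝒳} q(x) and each minimum is interpreted in [0, +∞] (the inequality being trivially true if the right-hand side is +∞). (Appendix Lemma 8 of the paper.) -/
open scoped ENNReal BigOperators

attribute [local instance] Classical.propDecidable

/-!
Two inequalities between `D` and the `ℓ¹` distance, glued by the triangle inequality for `ℓ¹`.

*Reverse Pinsker:* `D(p‖q) ≤ log₂(1/μ_q) ‖p - q‖₁`. Only the points with `p > q` contribute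
positively, and there `p/q ≤ 1/μ_q`; convexity of `t log t` bounds `t log t` by its chord
`2 (t - 1) log M` on `[1, M]` as soon as `M ≥ 2`. When `μ_q > 1/2` the space is a point and
`p = q`.

*Pinsker:* `‖a - b‖₁² ≤ 2 ln 2 · D(a‖b)`, from the pointwise bound
`3 (x - y)² ≤ 2 (x + 2y) (x log (x/y) - x + y)` and Cauchy–Schwarz with weights `x + 2y`,
which sum to `3`.
-/

open Real Set
open InformationTheory (klFun klFun_apply klFun_zero klFun_one klFun_nonneg hasDerivAt_klFun)

theorem le_of_hasDerivAt_of_mul_sub_one_nonneg {f f' : ℝ → ℝ}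
    (hf : ∀ x, 0 < x → HasDerivAt f (f' x) x) (hf' : ∀ x, 0 < x → 0 ≤ (x - 1) * f' x)
    {t : ℝ} (ht : 0 < t) : f 1 ≤ f t := by
  have hcont : ContinuousOn f (Ioi 0) := fun x hx => (hf x hx).continuousAt.continuousWithinAt
  rcases le_total 1 t with h1 | h1
  · refine monotoneOn_of_hasDerivWithinAt_nonneg (f' := f') (convex_Ici 1)
      (hcont.mono fun x (hx : 1 ≤ x) => one_pos.trans_le hx) (fun x hx => ?_) (fun x hx => ?_)
      self_mem_Ici h1 h1
    all_goals rw [interior_Ici, mem_Ioi] at hx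
    · exact (hf x (by linarith)).hasDerivWithinAt
    · exact nonneg_of_mul_nonneg_right (hf' x (by linarith)) (by linarith)
  · refine antitoneOn_of_hasDerivWithinAt_nonpos (f' := f') (convex_Icc t 1)
      (hcont.mono fun x hx => ht.trans_le hx.1) (fun x hx => ?_) (fun x hx => ?_)
      ⟨le_rfl, h1⟩ ⟨h1, le_rfl⟩ h1
    all_goals rw [interior_Icc] at hx
    · exact (hf x (by linarith [hx.1])).hasDerivWithinAt
    · exact nonpos_of_mul_nonneg_right (hf' x (by linarith [hx.1])) (by linarith [hx.2])

theorem monotoneOn_add_one_mul_log_sub :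
    MonotoneOn (fun t => (t + 1) * log t - 2 * (t - 1)) (Ioi 0) := by
  have hderiv : ∀ x : ℝ, 0 < x →
      HasDerivAt (fun t => (t + 1) * log t - 2 * (t - 1)) (log x + (x + 1) * x⁻¹ - 2) x := by
    intro x hx
    refine ((((hasDerivAt_id' x).add_const 1).mul (hasDerivAt_log hx.ne')).sub
      (((hasDerivAt_id' x).sub_const 1).const_mul 2)).congr_deriv ?_
    ring
  refine monotoneOn_of_hasDerivWithinAt_nonneg (convex_Ioi 0)
    (fun x hx => (hderiv x hx).continuousAt.continuousWithinAt)
    (fun x hx => (hderiv x (interior_subset hx)).hasDerivWithinAt) (fun x hx => ?_)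
  rw [interior_Ioi, mem_Ioi] at hx
  have := one_sub_inv_le_log_of_pos hx
  rw [add_mul, mul_inv_cancel₀ hx.ne']
  linarith

theorem mul_sub_one_add_one_mul_log_sub_nonneg {t : ℝ} (ht : 0 < t) :
    0 ≤ (t - 1) * ((t + 1) * log t - 2 * (t - 1)) := by
  have h1 : (1 : ℝ) ∈ Ioi 0 := mem_Ioi.2 one_pos
  rcases le_total 1 t with ht1 | ht1
  · have hk := monotoneOn_add_one_mul_log_sub h1 ht ht1
    simp only [log_one, mul_zero, sub_self] at hk
    exact mul_nonneg (by linarith) (by linarith)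
  · have hk := monotoneOn_add_one_mul_log_sub ht h1 ht1
    simp only [log_one, mul_zero, sub_self] at hk
    exact mul_nonneg_of_nonpos_of_nonpos (by linarith) (by linarith)

theorem three_mul_sq_sub_one_le_klFun {t : ℝ} (ht : 0 ≤ t) :
    3 * (t - 1) ^ 2 ≤ 2 * (t + 2) * klFun t := by
  rcases ht.eq_or_lt with rfl | ht
  · norm_num [klFun_zero]
  have key := le_of_hasDerivAt_of_mul_sub_one_nonneg
    (f := fun t => 2 * (t + 2) * klFun t - 3 * (t - 1) ^ 2)
    (f' := fun t => 4 * ((t + 1) * log t - 2 * (t - 1))) (fun x hx => ?_) (fun x hx => ?_) ht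
  · simp only [klFun_one] at key
    linarith
  · refine ((((hasDerivAt_id' x).add_const 2).const_mul 2).mul
      (hasDerivAt_klFun hx.ne') |>.sub
      (((hasDerivAt_id' x).sub_const 1).pow 2 |>.const_mul 3)).congr_deriv ?_
    rw [klFun_apply]
    ring
  · nlinarith [mul_sub_one_add_one_mul_log_sub_nonneg hx]

theorem mul_klFun_div {x y : ℝ} (hy : y ≠ 0) :
    y * klFun (x / y) = x * log (x / y) - x + y := by
  rw [klFun_apply]
  field_simp
  ring

theorem mul_log_div_sub_add_nonneg {x y : ℝ} (hx : 0 ≤ x) (hy : 0 ≤ y)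
    (hxy : y = 0 → x = 0) :
    0 ≤ x * log (x / y) - x + y := by
  rcases hy.eq_or_lt with rfl | hy
  · simp [hxy rfl]
  rw [← mul_klFun_div hy.ne']
  exact mul_nonneg hy.le (klFun_nonneg (div_nonneg hx hy.le))

theorem three_mul_sq_sub_le_mul_log {x y : ℝ} (hx : 0 ≤ x) (hy : 0 ≤ y)
    (hxy : y = 0 → x = 0) :
    3 * (x - y) ^ 2 ≤ 2 * (x + 2 * y) * (x * log (x / y) - x + y) := by
  rcases hy.eq_or_lt with rfl | hy
  · simp [hxy rfl]
  have key := three_mul_sq_sub_one_le_klFun (div_nonneg hx hy.le)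
  calc 3 * (x - y) ^ 2 = y ^ 2 * (3 * (x / y - 1) ^ 2) := by field_simp
    _ ≤ y ^ 2 * (2 * (x / y + 2) * klFun (x / y)) := by gcongr
    _ = 2 * (x + 2 * y) * (y * klFun (x / y)) := by field_simp
    _ = 2 * (x + 2 * y) * (x * log (x / y) - x + y) := by rw [mul_klFun_div hy.ne']

theorem mul_log_le_two_mul_sub_one_mul_log {t M : ℝ} (ht : 1 ≤ t) (htM : t ≤ M)
    (hM : 2 ≤ M) :
    t * log t ≤ 2 * (t - 1) * log M := by
  rcases ht.eq_or_lt with rfl | ht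
  · simp
  have hsecant := convexOn_mul_log.secant_mono (a := 1) (mem_Ici.2 zero_le_one)
    (mem_Ici.2 (by linarith : (0 : ℝ) ≤ t)) (mem_Ici.2 (by linarith : (0 : ℝ) ≤ M))
    ht.ne' (by linarith) htM
  simp only [log_one, mul_zero, sub_zero] at hsecant
  rw [div_le_div_iff₀ (by linarith) (by linarith)] at hsecant
  have hlogM : 0 ≤ log M := log_nonneg (by linarith)
  nlinarith [mul_nonneg (mul_nonneg hlogM (sub_nonneg.2 ht.le)) (by linarith : (0 : ℝ) ≤ M - 2)]

/-- `|p - q| + (p - q) = 2 (p - q)⁺`, which sums to `‖p - q‖₁` over two pmfs. -/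
theorem mul_log_div_le_abs_sub_add_sub_mul_log_inv {p q μ : ℝ} (hμ : 0 < μ) (hμq : μ ≤ q)
    (hp : 0 ≤ p) (hp1 : p ≤ 1) (h2μ : 2 * μ ≤ 1) :
    p * log (p / q) ≤ (|p - q| + (p - q)) * log μ⁻¹ := by
  have hq : 0 < q := hμ.trans_le hμq
  rcases le_total p q with hpq | hpq
  · rw [abs_of_nonpos (sub_nonpos.2 hpq), neg_add_cancel, zero_mul]
    exact mul_nonpos_of_nonneg_of_nonpos hp
      (log_nonpos (div_nonneg hp hq.le) ((div_le_one hq).2 hpq))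
  · have htM : p / q ≤ μ⁻¹ := by
      rw [← one_div]
      exact div_le_div₀ zero_le_one hp1 hμ hμq
    have hM : 2 ≤ μ⁻¹ := by rw [le_inv_comm₀ two_pos hμ]; linarith
    have key := mul_log_le_two_mul_sub_one_mul_log ((one_le_div hq).2 hpq) htM hM
    calc p * log (p / q) = q * (p / q * log (p / q)) := by field_simp
      _ ≤ q * (2 * (p / q - 1) * log μ⁻¹) := by gcongr
      _ = (|p - q| + (p - q)) * log μ⁻¹ := by
        rw [abs_of_nonneg (sub_nonneg.2 hpq)]
        field_simp
        ring

section Finite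

variable {α : Type*} [Fintype α]

theorem klDiv_eq_ofReal {a b : α → ℝ} (hab : ∀ x, b x = 0 → a x = 0) :
    klDiv a b = ENNReal.ofReal ((∑ x, a x * log (a x / b x)) / log 2) := by
  rw [klDiv, if_pos hab, Finset.sum_div]
  simp only [logb, mul_div_assoc]

theorem sq_sum_abs_sub_le_two_mul_sum_mul_log {a b : α → ℝ}
    (ha : IsPMF a) (hb : IsPMF b) (hab : ∀ x, b x = 0 → a x = 0) :
    (∑ x, |a x - b x|) ^ 2 ≤ 2 * ∑ x, a x * log (a x / b x) := by
  have hcs := Finset.sum_sq_le_sum_mul_sum_of_sq_le_mul Finset.univ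
    (r := fun x => |a x - b x|) (f := fun x => 2 / 3 * (a x * log (a x / b x) - a x + b x))
    (g := fun x => a x + 2 * b x)
    (fun x _ => by have := mul_log_div_sub_add_nonneg (ha.1 x) (hb.1 x) (hab x); positivity)
    (fun x _ => by have := ha.1 x; have := hb.1 x; positivity)
    (fun x _ => by
      have := three_mul_sq_sub_le_mul_log (ha.1 x) (hb.1 x) (hab x)
      rw [sq_abs]; linarith)
  simp only [← Finset.mul_sum, Finset.sum_add_distrib, Finset.sum_sub_distrib, ha.2, hb.2]
    at hcs
  linarith

theorem ofReal_sum_abs_sub_le_sqrt_klDiv {a b : α → ℝ}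
    (ha : IsPMF a) (hb : IsPMF b) :
    ENNReal.ofReal (∑ x, |a x - b x|) ≤
      ENNReal.ofReal (√(2 * log 2)) * klDiv a b ^ (1 / 2 : ℝ) := by
  have hlog2 : 0 < log 2 := log_pos one_lt_two
  by_cases hab : ∀ x, b x = 0 → a x = 0
  · have hpinsker := sq_sum_abs_sub_le_two_mul_sum_mul_log ha hb hab
    have hD : 0 ≤ (∑ x, a x * log (a x / b x)) / log 2 :=
      div_nonneg (by nlinarith [sq_nonneg (∑ x, |a x - b x|)]) hlog2.le
    rw [klDiv_eq_ofReal hab, ENNReal.ofReal_rpow_of_nonneg hD (by norm_num), ← sqrt_eq_rpow,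
      ← ENNReal.ofReal_mul (sqrt_nonneg _), ← sqrt_mul (by positivity)]
    refine ENNReal.ofReal_le_ofReal (le_sqrt_of_sq_le ?_)
    rwa [mul_assoc, mul_div_cancel₀ _ hlog2.ne']
  · rw [klDiv, if_neg hab, ENNReal.top_rpow_of_pos (by norm_num), ENNReal.mul_top]
    · exact le_top
    · simpa using hlog2

theorem ofReal_sum_abs_sub_le_sqrt_min_klDiv {a b : α → ℝ}
    (ha : IsPMF a) (hb : IsPMF b) :
    ENNReal.ofReal (∑ x, |a x - b x|) ≤
      ENNReal.ofReal (√(2 * log 2)) * min (klDiv a b) (klDiv b a) ^ (1 / 2 : ℝ) := by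
  rcases min_choice (klDiv a b) (klDiv b a) with h | h <;> rw [h]
  · exact ofReal_sum_abs_sub_le_sqrt_klDiv ha hb
  · simpa only [abs_sub_comm (b _)] using ofReal_sum_abs_sub_le_sqrt_klDiv hb ha

theorem sum_abs_sub_le_add (p q r : α → ℝ) :
    ∑ x, |p x - q x| ≤ ∑ x, |p x - r x| + ∑ x, |q x - r x| := by
  rw [← Finset.sum_add_distrib]
  gcongr with x
  rw [abs_sub_comm (q x)]
  exact abs_sub_le _ _ _

theorem sum_mul_log_div_le_log_inv_mul_sum_abs_sub {p q : α → ℝ}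
    (hp : IsPMF p) (hq : IsPMF q) {μ : ℝ} (hμ : 0 < μ) (hμq : ∀ x, μ ≤ q x)
    (h2μ : 2 * μ ≤ 1) :
    ∑ x, p x * log (p x / q x) ≤ log μ⁻¹ * ∑ x, |p x - q x| := by
  have hp1 : ∀ x, p x ≤ 1 := fun x =>
    hp.2 ▸ Finset.single_le_sum (fun i _ => hp.1 i) (Finset.mem_univ x)
  calc ∑ x, p x * log (p x / q x) ≤ ∑ x, (|p x - q x| + (p x - q x)) * log μ⁻¹ :=
        Finset.sum_le_sum fun x _ =>
          mul_log_div_le_abs_sub_add_sub_mul_log_inv hμ (hμq x) (hp.1 x) (hp1 x) h2μ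
    _ = log μ⁻¹ * ∑ x, |p x - q x| := by
      rw [← Finset.sum_mul, Finset.sum_add_distrib, Finset.sum_sub_distrib, hp.2, hq.2]
      ring

theorem IsPMF.eq_of_subsingleton_s2 [Subsingleton α] {p q : α → ℝ}
    (hp : IsPMF p) (hq : IsPMF q) : p = q := by
  funext x
  rw [← Fintype.sum_subsingleton p x, ← Fintype.sum_subsingleton q x, hp.2, hq.2]

theorem IsPMF.two_mul_le_one_of_forall_le [Nontrivial α] {q : α → ℝ}
    (hq : IsPMF q) {μ : ℝ} (hμq : ∀ x, μ ≤ q x) : 2 * μ ≤ 1 := by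
  obtain ⟨x, y, hxy⟩ := exists_pair_ne α
  have : q x + q y ≤ 1 := by
    rw [← hq.2, ← Finset.sum_pair hxy]
    exact Finset.sum_le_sum_of_subset_of_nonneg (Finset.subset_univ _) fun i _ _ => hq.1 i
  linarith [hμq x, hμq y]

theorem klDiv_le_ofReal_logb_inv_inf'_mul [Nonempty α] {p q : α → ℝ}
    (hp : IsPMF p) (hq : IsPMF q) (hqpos : ∀ x, 0 < q x) :
    klDiv p q ≤ ENNReal.ofReal (logb 2 (Finset.univ.inf' Finset.univ_nonempty q)⁻¹) *
      ENNReal.ofReal (∑ x, |p x - q x|) := by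
  set μ := Finset.univ.inf' Finset.univ_nonempty q
  have hμq : ∀ x, μ ≤ q x := fun x => Finset.inf'_le _ (Finset.mem_univ x)
  have hμ : 0 < μ := (Finset.lt_inf'_iff _).2 fun x _ => hqpos x
  rw [klDiv_eq_ofReal fun x hx => absurd hx (hqpos x).ne',
    ← ENNReal.ofReal_mul' (Finset.sum_nonneg fun x _ => abs_nonneg _)]
  refine ENNReal.ofReal_le_ofReal ?_
  rcases subsingleton_or_nontrivial α with hα | hα
  · simp [hp.eq_of_subsingleton_s2 hq, div_self (hqpos _).ne']
  · rw [logb, div_mul_eq_mul_div]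
    gcongr
    exact sum_mul_log_div_le_log_inv_mul_sum_abs_sub hp hq hμ hμq
      (hq.two_mul_le_one_of_forall_le hμq)

end Finite

/-- Appendix Lemma 8: triangle-like inequality
`D(p‖q) ≤ log₂(1/μ_q) · √(2 ln 2) · [√(min(D(p‖r),D(r‖p))) + √(min(D(q‖r),D(r‖q)))]`,
where the minima are taken in `[0, +∞]` (the inequality is trivially true
when the right-hand side is `+∞`). -/
theorem kl_triangle_like {𝒳 : Type*} [Fintype 𝒳] [Nonempty 𝒳]
    (p q r : 𝒳 → ℝ) (hp : IsPMF p) (hq : IsPMF q) (hr : IsPMF r)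
    (hqpos : ∀ x, 0 < q x) :
    klDiv p q ≤
      ENNReal.ofReal
          (Real.logb 2 ((Finset.univ.inf' Finset.univ_nonempty q)⁻¹) *
            Real.sqrt (2 * Real.log 2)) *
        ((min (klDiv p r) (klDiv r p)) ^ (1 / 2 : ℝ) +
          (min (klDiv q r) (klDiv r q)) ^ (1 / 2 : ℝ)) := by
  set L := ENNReal.ofReal (logb 2 (Finset.univ.inf' Finset.univ_nonempty q)⁻¹)
  set c := ENNReal.ofReal (√(2 * log 2))
  calc klDiv p q ≤ L * ENNReal.ofReal (∑ x, |p x - q x|) :=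
        klDiv_le_ofReal_logb_inv_inf'_mul hp hq hqpos
    _ ≤ L * (ENNReal.ofReal (∑ x, |p x - r x|) + ENNReal.ofReal (∑ x, |q x - r x|)) := by
      rw [← ENNReal.ofReal_add (Finset.sum_nonneg fun x _ => abs_nonneg _)
        (Finset.sum_nonneg fun x _ => abs_nonneg _)]
      gcongr
      exact sum_abs_sub_le_add p q r
    _ ≤ L * (c * min (klDiv p r) (klDiv r p) ^ (1 / 2 : ℝ) +
          c * min (klDiv q r) (klDiv r q) ^ (1 / 2 : ℝ)) := by
      gcongr
      exacts [ofReal_sum_abs_sub_le_sqrt_min_klDiv hp hr,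
        ofReal_sum_abs_sub_le_sqrt_min_klDiv hq hr]
    _ = _ := by rw [ENNReal.ofReal_mul' (sqrt_nonneg _)]; ring
end

section
/- Let 𝒳 be a finite set with |𝒳| ≥ 2 and let p, q be pmfs on 𝒳. Set D = √(2 ln 2) · √(min(D(p‖q), D(q‖p))). If 0 < D ≤ 1/2, then |H(q) − H(p)| ≤ D · log₂(|𝒳| / D). (Appendix Lemma 9 of the paper.) -/
open scoped ENNReal BigOperators

attribute [local instance] Classical.propDecidable

/-- Base-2 Shannon entropy of a pmf. -/
noncomputable def shannonEntropy {α : Type*} [Fintype α] (p : α → ℝ) : ℝ :=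
  -∑ x, p x * Real.logb 2 (p x)

/-!
Pinsker's inequality bounds the total variation `T = ∑ |p x - q x|` by `D`, whichever of the two
divergences realises the minimum. Fannes' inequality then bounds `|H(q) - H(p)|` by
`T log₂ (|𝒳| / T)`, and `x ↦ x log (|𝒳| / x)` is increasing on `[0, |𝒳| / e] ⊇ [0, 1/2]`.

Pinsker follows from the pointwise bound `a log (a / b) - a + b ≥ 3 (a - b)² / (2 (a + 2 b))`
and Cauchy–Schwarz. Fannes follows from `|η x - η y| ≤ η |x - y|` for `η = negMulLog` and
`|x - y| ≤ 1/2`, summed and combined with Jensen's inequality for the concave `η`.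
-/

open Real Set
open InformationTheory (klFun klFun_apply klFun_zero klFun_one hasDerivAt_klFun)

lemma isMinOn_Ioi_of_hasDerivAt_of_sign {f f' : ℝ → ℝ} {a c : ℝ} (hc : a < c)
    (hf : ∀ y, a < y → HasDerivAt f (f' y) y) (hsign : ∀ y, a < y → 0 ≤ (y - c) * f' y) :
    IsMinOn f (Ioi a) c := by
  intro x (hx : a < x)
  have hcont : ContinuousOn f (Ioi a) := fun y hy => (hf y hy).continuousAt.continuousWithinAt
  rcases le_total c x with hcx | hxc
  · refine monotoneOn_of_hasDerivWithinAt_nonneg (f' := f') (convex_Icc c x)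
      (hcont.mono fun y hy => hc.trans_le hy.1) (fun y hy => ?_) (fun y hy => ?_)
      (left_mem_Icc.2 hcx) (right_mem_Icc.2 hcx) hcx <;> rw [interior_Icc] at hy
    · exact (hf y (hc.trans hy.1)).hasDerivWithinAt
    · exact nonneg_of_mul_nonneg_right (hsign y (hc.trans hy.1)) (sub_pos.2 hy.1)
  · refine antitoneOn_of_hasDerivWithinAt_nonpos (f' := f') (convex_Icc x c)
      (hcont.mono fun y hy => hx.trans_le hy.1) (fun y hy => ?_) (fun y hy => ?_)
      (left_mem_Icc.2 hxc) (right_mem_Icc.2 hxc) hxc <;> rw [interior_Icc] at hy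
    · exact (hf y (hx.trans hy.1)).hasDerivWithinAt
    · exact nonpos_of_mul_nonneg_right (hsign y (hx.trans hy.1)) (sub_neg.2 hy.2)

lemma mul_log_sub_two_mul_sub_one_div_nonneg {t : ℝ} (ht : 0 < t) :
    0 ≤ (t - 1) * (log t - 2 * (t - 1) / (t + 1)) := by
  have hderiv : ∀ y, 0 < y → HasDerivAt (fun t => log t - 2 * (t - 1) / (t + 1))
      ((y - 1) ^ 2 / (y * (y + 1) ^ 2)) y := by
    intro y hy
    have hquot := (((hasDerivAt_id' y).sub_const 1).const_mul 2).fun_div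
      ((hasDerivAt_id' y).add_const 1) (by positivity)
    refine ((hasDerivAt_log hy.ne').sub hquot).congr_deriv ?_
    field_simp
    ring
  have hmono : MonotoneOn (fun t => log t - 2 * (t - 1) / (t + 1)) (Ioi 0) :=
    monotoneOn_of_hasDerivWithinAt_nonneg (convex_Ioi 0)
      (fun y hy => (hderiv y hy).continuousAt.continuousWithinAt)
      (fun y hy => (hderiv y (by simpa using hy)).hasDerivWithinAt)
      (fun y hy => by rw [interior_Ioi] at hy; have : 0 < y := hy; positivity)
  have hone : log 1 - 2 * (1 - 1) / (1 + 1) = (0 : ℝ) := by simp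
  rcases le_total 1 t with h1 | h1
  · exact mul_nonneg (by linarith) (hone ▸ hmono (mem_Ioi.2 one_pos) (mem_Ioi.2 ht) h1)
  · exact mul_nonneg_of_nonpos_of_nonpos (by linarith)
      (hone ▸ hmono (mem_Ioi.2 ht) (mem_Ioi.2 one_pos) h1)

lemma three_mul_sq_div_le_klFun {t : ℝ} (ht : 0 ≤ t) :
    3 * (t - 1) ^ 2 / (2 * (t + 2)) ≤ klFun t := by
  rcases ht.eq_or_lt with rfl | ht
  · norm_num [klFun_zero]
  set f : ℝ → ℝ := fun t => klFun t - 3 * (t - 1) ^ 2 / (2 * (t + 2))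
  have hderiv : ∀ y, 0 < y →
      HasDerivAt f (log y - 3 * (y - 1) * (y + 5) / (2 * (y + 2) ^ 2)) y := by
    intro y hy
    have hquot := ((((hasDerivAt_id' y).sub_const 1).fun_pow 2).const_mul 3).fun_div
      (((hasDerivAt_id' y).add_const 2).const_mul 2) (by positivity)
    refine ((hasDerivAt_klFun hy.ne').sub hquot).congr_deriv ?_
    field_simp
    ring
  -- `f'` exceeds the Padé bound on `log y` by `(y - 1)³ / (2 (y + 1) (y + 2)²)`.
  have hsign : ∀ y, 0 < y →
      0 ≤ (y - 1) * (log y - 3 * (y - 1) * (y + 5) / (2 * (y + 2) ^ 2)) := by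
    intro y hy
    have hgap : (y - 1) * (log y - 3 * (y - 1) * (y + 5) / (2 * (y + 2) ^ 2)) =
        (y - 1) * (log y - 2 * (y - 1) / (y + 1)) + (y - 1) ^ 4 / (2 * (y + 1) * (y + 2) ^ 2) := by
      field_simp
      ring
    rw [hgap]
    have := mul_log_sub_two_mul_sub_one_div_nonneg hy
    positivity
  have hmin : f 1 ≤ f t := isMinOn_Ioi_of_hasDerivAt_of_sign one_pos hderiv hsign (mem_Ioi.2 ht)
  norm_num [f, klFun_one] at hmin
  linarith

lemma three_mul_sq_div_le_mul_log_div_sub {a b : ℝ} (ha : 0 ≤ a) (hb : 0 ≤ b)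
    (hab : b = 0 → a = 0) :
    3 * (a - b) ^ 2 / (2 * (a + 2 * b)) ≤ a * log (a / b) - a + b := by
  rcases hb.eq_or_lt with rfl | hb
  · simp [hab rfl]
  calc 3 * (a - b) ^ 2 / (2 * (a + 2 * b)) = b * (3 * (a / b - 1) ^ 2 / (2 * (a / b + 2))) := by
        field_simp
    _ ≤ b * klFun (a / b) := by gcongr; exact three_mul_sq_div_le_klFun (by positivity)
    _ = a * log (a / b) - a + b := by rw [klFun_apply]; field_simp; ring

/-- **Pinsker's inequality**, in nats. -/
theorem sq_sum_abs_sub_le_two_mul_sum_mul_log_div {α : Type*} [Fintype α] {p q : α → ℝ}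
    (hp : IsPMF p) (hq : IsPMF q) (hpq : ∀ x, q x = 0 → p x = 0) :
    (∑ x, |p x - q x|) ^ 2 ≤ 2 * ∑ x, p x * log (p x / q x) := by
  obtain ⟨hp0, hp1⟩ := hp
  obtain ⟨hq0, hq1⟩ := hq
  have hterm : ∀ x, 3 * (p x - q x) ^ 2 / (2 * (p x + 2 * q x)) ≤
      p x * log (p x / q x) - p x + q x :=
    fun x => three_mul_sq_div_le_mul_log_div_sub (hp0 x) (hq0 x) (hpq x)
  -- Cauchy–Schwarz with the weights `(p + 2q)/3`, which sum to one.
  have hCS : (∑ x, |p x - q x|) ^ 2 ≤ (∑ x, (p x + 2 * q x) / 3) *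
      ∑ x, 2 * (p x * log (p x / q x) - p x + q x) := by
    refine Finset.sum_sq_le_sum_mul_sum_of_sq_le_mul _ (fun x _ => by linarith [hp0 x, hq0 x])
      (fun x _ => ?_) (fun x _ => ?_)
    · have := hp0 x
      have := hq0 x
      have : 0 ≤ 3 * (p x - q x) ^ 2 / (2 * (p x + 2 * q x)) := by positivity
      linarith [hterm x]
    · rcases (add_nonneg (hp0 x) (mul_nonneg zero_le_two (hq0 x))).eq_or_lt with h | h
      · have hpx : p x = 0 := by linarith [hp0 x, hq0 x]
        have hqx : q x = 0 := by linarith [hp0 x, hq0 x]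
        simp [hpx, hqx]
      · have := (div_le_iff₀ (by positivity)).1 (hterm x)
        rw [sq_abs]
        linarith
  have hweights : ∑ x, (p x + 2 * q x) / 3 = 1 := by
    rw [← Finset.sum_div, Finset.sum_add_distrib, ← Finset.mul_sum, hp1, hq1]
    norm_num
  have hsum : ∑ x, 2 * (p x * log (p x / q x) - p x + q x) =
      2 * ∑ x, p x * log (p x / q x) := by
    simp only [← Finset.mul_sum, Finset.sum_add_distrib, Finset.sum_sub_distrib, hp1, hq1,
      sub_add_cancel]
  rwa [hweights, one_mul, hsum] at hCS

theorem ofReal_sq_sum_abs_sub_le_klDiv {α : Type*} [Fintype α] {p q : α → ℝ}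
    (hp : IsPMF p) (hq : IsPMF q) :
    ENNReal.ofReal ((∑ x, |p x - q x|) ^ 2) ≤ ENNReal.ofReal (2 * log 2) * klDiv p q := by
  unfold klDiv
  split_ifs with hpq
  · rw [← ENNReal.ofReal_mul (by positivity)]
    refine ENNReal.ofReal_le_ofReal
      ((sq_sum_abs_sub_le_two_mul_sum_mul_log_div hp hq hpq).trans_eq ?_)
    simp only [Finset.mul_sum, logb]
    refine Finset.sum_congr rfl fun x _ => ?_
    field_simp
  · rw [ENNReal.mul_top (by simp [log_pos one_lt_two])]
    exact le_top

-- Both `-log` bounds come from `log x ≤ x - 1`, and `1/s - 1 = t/s` because `s = 1 - t`.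
lemma negMulLog_one_sub_le {t : ℝ} (ht0 : 0 ≤ t) (ht : t ≤ 1 / 2) :
    negMulLog (1 - t) ≤ negMulLog t := by
  rcases ht0.eq_or_lt with rfl | ht0
  · simp
  set s := 1 - t with hs
  have hs0 : 0 < s := by linarith
  have hlog_div : 1 - t / s ≤ log (s / t) := by
    simpa using one_sub_inv_le_log_of_pos (div_pos hs0 ht0)
  have hlog_s : -log s ≤ t / s := by
    have := log_le_sub_one_of_pos (inv_pos.2 hs0)
    rw [log_inv] at this
    convert this using 1
    field_simp
    linarith
  have hdiff : negMulLog t - negMulLog s = t * log (s / t) + (s - t) * log s := by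
    rw [log_div hs0.ne' ht0.ne', negMulLog, negMulLog]
    ring
  have h1 := mul_le_mul_of_nonneg_left hlog_div ht0.le
  have h2 := mul_le_mul_of_nonneg_left hlog_s (show 0 ≤ s - t by linarith)
  have h3 : t * (1 - t / s) = (s - t) * (t / s) := by field_simp
  linarith

lemma negMulLog_add_le {x t : ℝ} (hx : 0 ≤ x) (ht : 0 ≤ t) :
    negMulLog (x + t) ≤ negMulLog x + negMulLog t := by
  rcases hx.eq_or_lt with rfl | hx
  · simp
  rcases ht.eq_or_lt with rfl | ht
  · simp
  have hlx : log x ≤ log (x + t) := log_le_log hx (by linarith)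
  have hlt : log t ≤ log (x + t) := log_le_log ht (by linarith)
  simp only [negMulLog]
  nlinarith [mul_le_mul_of_nonneg_left hlx hx.le, mul_le_mul_of_nonneg_left hlt ht.le]

-- `u ↦ negMulLog u - negMulLog (u + t)` is increasing, so the worst case is `x = 1 - t`.
lemma negMulLog_sub_negMulLog_add_le {x t : ℝ} (hx : 0 ≤ x) (ht0 : 0 ≤ t) (ht : t ≤ 1 / 2)
    (hxt : x + t ≤ 1) : negMulLog x - negMulLog (x + t) ≤ negMulLog t := by
  have hmono : MonotoneOn (fun u => negMulLog u - negMulLog (u + t)) (Icc x (1 - t)) := by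
    refine monotoneOn_of_hasDerivWithinAt_nonneg (f' := fun u => log (u + t) - log u)
      (convex_Icc _ _) (by fun_prop) (fun u hu => ?_) (fun u hu => ?_) <;>
      rw [interior_Icc] at hu <;> have hu0 : 0 < u := hx.trans_lt hu.1
    · refine ((hasDerivAt_negMulLog hu0.ne').sub ((hasDerivAt_negMulLog (by linarith)).comp u
        ((hasDerivAt_id' u).add_const t))).hasDerivWithinAt.congr_deriv ?_
      ring
    · exact sub_nonneg.2 (log_le_log hu0 (by linarith))
  have := hmono (left_mem_Icc.2 (by linarith)) (right_mem_Icc.2 (by linarith))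
    (show x ≤ 1 - t by linarith)
  simp only [sub_add_cancel, negMulLog_one, sub_zero] at this
  linarith [negMulLog_one_sub_le ht0 ht]

lemma abs_negMulLog_sub_le {x y : ℝ} (hx : 0 ≤ x) (hy : 0 ≤ y) (hx1 : x ≤ 1) (hy1 : y ≤ 1)
    (hxy : |x - y| ≤ 1 / 2) : |negMulLog x - negMulLog y| ≤ negMulLog |x - y| := by
  wlog hle : x ≤ y generalizing x y
  · rw [abs_sub_comm, abs_sub_comm x]
    exact this hy hx hy1 hx1 (by rwa [abs_sub_comm]) (le_of_not_ge hle)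
  obtain ⟨t, ht0, rfl⟩ : ∃ t, 0 ≤ t ∧ y = x + t := ⟨y - x, by linarith, by ring⟩
  rw [show x - (x + t) = -t by ring, abs_neg, abs_of_nonneg ht0] at hxy ⊢
  rw [abs_sub_le_iff]
  exact ⟨negMulLog_sub_negMulLog_add_le hx ht0 hxy hy1, by linarith [negMulLog_add_le hx ht0]⟩

lemma sum_negMulLog_le_mul_log_card_div {α : Type*} [Fintype α] [Nonempty α] {t : α → ℝ}
    (ht : ∀ x, 0 ≤ t x) :
    ∑ x, negMulLog (t x) ≤ (∑ x, t x) * log ((Fintype.card α : ℝ) / ∑ x, t x) := by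
  set d : ℝ := (Fintype.card α : ℝ)
  have hd : 0 < d := Nat.cast_pos.2 Fintype.card_pos
  have hJensen := concaveOn_negMulLog.le_map_sum (t := Finset.univ) (w := fun _ => d⁻¹) (p := t)
    (fun _ _ => by positivity) (by simp [d, hd.ne']) (fun x _ => ht x)
  simp only [smul_eq_mul, ← Finset.mul_sum] at hJensen
  calc ∑ x, negMulLog (t x) = d * (d⁻¹ * ∑ x, negMulLog (t x)) := by field_simp
    _ ≤ d * negMulLog (d⁻¹ * ∑ x, t x) := by gcongr
    _ = (∑ x, t x) * log (d / ∑ x, t x) := by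
      rw [negMulLog, ← inv_div, log_inv]
      field_simp

/-- **Fannes' inequality** for the entropy in nats. -/
theorem abs_sum_negMulLog_sub_le {α : Type*} [Fintype α] {p q : α → ℝ} (hp : IsPMF p)
    (hq : IsPMF q) (hpq : ∑ x, |p x - q x| ≤ 1 / 2) :
    |∑ x, negMulLog (q x) - ∑ x, negMulLog (p x)| ≤
      (∑ x, |p x - q x|) * log ((Fintype.card α : ℝ) / ∑ x, |p x - q x|) := by
  obtain ⟨hp0, hp1⟩ := hp
  obtain ⟨hq0, hq1⟩ := hq
  have : Nonempty α := by
    by_contra h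
    simp [not_nonempty_iff.1 h] at hp1
  have hle_one : ∀ {r : α → ℝ}, (∀ x, 0 ≤ r x) → ∑ x, r x = 1 → ∀ x, r x ≤ 1 :=
    fun hr0 hr1 x => hr1 ▸ Finset.single_le_sum (fun y _ => hr0 y) (Finset.mem_univ x)
  calc |∑ x, negMulLog (q x) - ∑ x, negMulLog (p x)|
      ≤ ∑ x, |negMulLog (q x) - negMulLog (p x)| := by
        rw [← Finset.sum_sub_distrib]
        exact Finset.abs_sum_le_sum_abs _ _
    _ ≤ ∑ x, negMulLog |p x - q x| := by
        refine Finset.sum_le_sum fun x _ => ?_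
        rw [abs_sub_comm (p x)]
        refine abs_negMulLog_sub_le (hq0 x) (hp0 x) (hle_one hq0 hq1 x) (hle_one hp0 hp1 x) ?_
        rw [abs_sub_comm]
        exact (Finset.single_le_sum (f := fun y => |p y - q y|) (fun y _ => abs_nonneg _)
          (Finset.mem_univ x)).trans hpq
    _ ≤ _ := sum_negMulLog_le_mul_log_card_div fun x => abs_nonneg _

lemma mul_log_div_le_mul_log_div {a b d : ℝ} (ha : 0 ≤ a) (hab : a ≤ b) (hd : 0 < d)
    (hbd : exp 1 * b ≤ d) : a * log (d / a) ≤ b * log (d / b) := by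
  have hform : ∀ x, x * log (d / x) = x * log d + negMulLog x := by
    intro x
    rcases eq_or_ne x 0 with rfl | hx
    · simp
    rw [log_div hd.ne' hx, negMulLog]
    ring
  simp only [hform]
  refine monotoneOn_of_hasDerivWithinAt_nonneg (f := fun x => x * log d + negMulLog x)
    (f' := fun u => log d - log u - 1)
    (convex_Icc a b) (by fun_prop) (fun u hu => ?_) (fun u hu => ?_)
    (left_mem_Icc.2 hab) (right_mem_Icc.2 hab) hab <;>
    rw [interior_Icc] at hu <;> have hu0 : 0 < u := ha.trans_lt hu.1
  · refine (((hasDerivAt_id' u).mul_const (log d)).add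
      (hasDerivAt_negMulLog hu0.ne')).hasDerivWithinAt.congr_deriv ?_
    ring
  · have : log (exp 1 * u) ≤ log d := log_le_log (by positivity) (by nlinarith [exp_pos 1, hu.2])
    rw [log_mul (exp_pos 1).ne' hu0.ne', log_exp] at this
    linarith

lemma shannonEntropy_eq_sum_negMulLog_div {α : Type*} [Fintype α] (p : α → ℝ) :
    shannonEntropy p = (∑ x, negMulLog (p x)) / log 2 := by
  simp only [shannonEntropy, negMulLog, logb, Finset.sum_div, ← Finset.sum_neg_distrib]
  refine Finset.sum_congr rfl fun x _ => ?_
  ring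

theorem ofReal_sum_abs_sub_le_min_klDiv {α : Type*} [Fintype α] {p q : α → ℝ}
    (hp : IsPMF p) (hq : IsPMF q) :
    ENNReal.ofReal (∑ x, |p x - q x|) ≤
      ENNReal.ofReal (√(2 * log 2)) * (min (klDiv p q) (klDiv q p)) ^ (1 / 2 : ℝ) := by
  have hsq : (ENNReal.ofReal (√(2 * log 2)) * (min (klDiv p q) (klDiv q p)) ^ (1 / 2 : ℝ)) ^ 2 =
      ENNReal.ofReal (2 * log 2) * min (klDiv p q) (klDiv q p) := by
    rw [mul_pow, ← ENNReal.ofReal_pow (sqrt_nonneg _), sq_sqrt (by positivity),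
      ← ENNReal.rpow_natCast, ← ENNReal.rpow_mul]
    norm_num
  rw [← ENNReal.pow_le_pow_left_iff two_ne_zero, hsq,
    ← ENNReal.ofReal_pow (Finset.sum_nonneg fun x _ => abs_nonneg _), mul_min]
  refine le_min (ofReal_sq_sum_abs_sub_le_klDiv hp hq) ?_
  simpa only [abs_sub_comm] using ofReal_sq_sum_abs_sub_le_klDiv hq hp

theorem entropy_diff_le_general {𝒳 : Type*} [Fintype 𝒳] (hcard : 2 ≤ Fintype.card 𝒳)
    (p q : 𝒳 → ℝ) (hp : IsPMF p) (hq : IsPMF q) (D : ℝ≥0∞)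
    (hD : D = ENNReal.ofReal (Real.sqrt (2 * Real.log 2)) *
      (min (klDiv p q) (klDiv q p)) ^ (1 / 2 : ℝ))
    (hDhalf : D ≤ ENNReal.ofReal (1 / 2)) :
    |shannonEntropy q - shannonEntropy p| ≤
      D.toReal * Real.logb 2 ((Fintype.card 𝒳 : ℝ) / D.toReal) := by
  have hD_top : D ≠ ⊤ := ne_top_of_le_ne_top ENNReal.ofReal_ne_top hDhalf
  have hD_half : D.toReal ≤ 1 / 2 := ENNReal.toReal_le_of_le_ofReal (by norm_num) hDhalf
  have hTD : ∑ x, |p x - q x| ≤ D.toReal :=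
    (ENNReal.ofReal_le_iff_le_toReal hD_top).1 (hD ▸ ofReal_sum_abs_sub_le_min_klDiv hp hq)
  have hD_card : exp 1 * D.toReal ≤ Fintype.card 𝒳 := by
    have : (2 : ℝ) ≤ Fintype.card 𝒳 := by exact_mod_cast hcard
    nlinarith [exp_one_lt_d9, ENNReal.toReal_nonneg (a := D)]
  rw [shannonEntropy_eq_sum_negMulLog_div, shannonEntropy_eq_sum_negMulLog_div, ← sub_div,
    abs_div, abs_of_pos (log_pos one_lt_two), logb, ← mul_div_assoc]
  gcongr
  exact (abs_sum_negMulLog_sub_le hp hq (hTD.trans hD_half)).trans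
    (mul_log_div_le_mul_log_div (Finset.sum_nonneg fun x _ => abs_nonneg _) hTD
      (by positivity) hD_card)

/-- Appendix Lemma 9: entropy continuity. With
`D = √(2 ln 2) · √(min(D(p‖q), D(q‖p)))` (in `[0,+∞]`), if `0 < D ≤ 1/2`
then `|H(q) − H(p)| ≤ D · log₂(|𝒳|/D)`. -/
theorem entropy_diff_le {𝒳 : Type*} [Fintype 𝒳] (hcard : 2 ≤ Fintype.card 𝒳)
    (p q : 𝒳 → ℝ) (hp : IsPMF p) (hq : IsPMF q) (D : ℝ≥0∞)
    (hD : D = ENNReal.ofReal (Real.sqrt (2 * Real.log 2)) *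
      (min (klDiv p q) (klDiv q p)) ^ (1 / 2 : ℝ))
    (hD0 : 0 < D) (hDhalf : D ≤ ENNReal.ofReal (1 / 2)) :
    |shannonEntropy q - shannonEntropy p| ≤
      D.toReal * Real.logb 2 ((Fintype.card 𝒳 : ℝ) / D.toReal) :=
  entropy_diff_le_general hcard p q hp hq D hD hDhalf
end

section
/- Let 𝒳 be a finite nonempty set, N ≥ 1, and let q be a pmf on 𝒳^N with coordinate random variables U¹, …, U^N. Let δ > 0 and let V ⊆ {1, …, N} be such that H(U^j | U^{1:j−1}) > log₂|𝒳| − δ for every j ∈ V (conditional entropies computed under q). Define the pmf p̃ on 𝒳^N by p̃(u^{1:N}) = ∏_{j∈V} |𝒳|^{−1} · ∏_{j∉V} q_{U^j|U^{1:j−1}}(u^j | u^{1:j−1}). Then D(q ‖ p̃) = ∑_{j∈V} ( log₂|𝒳| − H(U^j | U^{1:j−1}) ) ≤ |V| δ ≤ N δ. (Core computation of Lemma 1 of the paper, which analyzes the resolvability-achieving polar encoder; the polar transform is an invertible map and leaves both sides unchanged.) -/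
open scoped ENNReal BigOperators

attribute [local instance] Classical.propDecidable

/-- Probability, under the pmf `q` on `𝒳^N`, that the coordinates strictly
before `j` agree with `u`. -/
noncomputable def prefLT {𝒳 : Type*} [Fintype 𝒳] [DecidableEq 𝒳] {N : ℕ}
    (q : (Fin N → 𝒳) → ℝ) (j : Fin N) (u : Fin N → 𝒳) : ℝ :=
  ∑ x : Fin N → 𝒳, if ∀ l, l < j → x l = u l then q x else 0

/-- Probability, under the pmf `q` on `𝒳^N`, that the coordinates up to and
including `j` agree with `u`. -/
noncomputable def prefLE {𝒳 : Type*} [Fintype 𝒳] [DecidableEq 𝒳] {N : ℕ}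
    (q : (Fin N → 𝒳) → ℝ) (j : Fin N) (u : Fin N → 𝒳) : ℝ :=
  ∑ x : Fin N → 𝒳, if ∀ l, l ≤ j → x l = u l then q x else 0

/-- Conditional probability `q_{U^j | U^{1:j−1}}(u^j | u^{1:j−1})`, with the
uniform distribution chosen for conditioning prefixes of probability zero. -/
noncomputable def condProb {𝒳 : Type*} [Fintype 𝒳] [DecidableEq 𝒳] {N : ℕ}
    (q : (Fin N → 𝒳) → ℝ) (j : Fin N) (u : Fin N → 𝒳) : ℝ :=
  if prefLT q j u = 0 then (Fintype.card 𝒳 : ℝ)⁻¹ else prefLE q j u / prefLT q j u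

/-- Conditional Shannon entropy `H(U^j | U^{1:j−1})` under the pmf `q`,
i.e. the expectation over prefixes of the entropy of the conditional pmf. -/
noncomputable def condEnt {𝒳 : Type*} [Fintype 𝒳] [DecidableEq 𝒳] {N : ℕ}
    (q : (Fin N → 𝒳) → ℝ) (j : Fin N) : ℝ :=
  -∑ u, q u * Real.logb 2 (condProb q j u)

/-!
Along any sequence `u` with `q u > 0` the chain rule writes `q u` as the telescoping product
`∏ⱼ q_{U^j|U^{1:j-1}}(u^j | u^{1:j-1})`, so in `q u / p̃ u` every factor with `j ∉ V` cancels and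
`log₂ (q u / p̃ u) = ∑_{j ∈ V} (log₂ |𝒳| + log₂ q_{U^j|U^{1:j-1}}(u^j | u^{1:j-1}))`.
Averaging over `q` turns the second summand into `-H(U^j | U^{1:j-1})`.
-/

open Finset

theorem prod_range_div_of_ne_zero {G₀ : Type*} [CommGroupWithZero G₀] (f : ℕ → G₀)
    (hf : ∀ k, f k ≠ 0) (n : ℕ) : ∏ k ∈ range n, f (k + 1) / f k = f n / f 0 := by
  induction n with
  | zero => simp [div_self (hf 0)]
  | succ n ih =>
    rw [prod_range_succ, ih, div_mul_div_comm, mul_comm (f 0), mul_div_mul_left _ _ (hf n)]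

theorem klDiv_eq_ofReal_s4 {α : Type*} [Fintype α] {p q : α → ℝ} (h : ∀ x, p x ≠ 0 → q x ≠ 0) :
    klDiv p q = ENNReal.ofReal (∑ x, p x * Real.logb 2 (p x / q x)) :=
  if_pos fun x hqx => by_contra fun hpx => h x hpx hqx

section ChainRule

variable {𝒳 : Type*} [Fintype 𝒳] [DecidableEq 𝒳] {N : ℕ} (q : (Fin N → 𝒳) → ℝ)

/-- `prefLT` and `prefLE` indexed by a natural number, so that the chain rule telescopes from
`k = 0` to `k = N`. -/
noncomputable def prefixProb (u : Fin N → 𝒳) (k : ℕ) : ℝ :=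
  ∑ x : Fin N → 𝒳, if ∀ l : Fin N, (l : ℕ) < k → x l = u l then q x else 0

theorem prefLT_eq_prefixProb (j : Fin N) (u : Fin N → 𝒳) :
    prefLT q j u = prefixProb q u j := by
  simp only [prefLT, prefixProb, Fin.lt_def]

theorem prefLE_eq_prefixProb (j : Fin N) (u : Fin N → 𝒳) :
    prefLE q j u = prefixProb q u (j + 1) := by
  simp only [prefLE, prefixProb, Fin.le_def, Nat.lt_succ_iff]

theorem prefixProb_N (u : Fin N → 𝒳) : prefixProb q u N = q u := by
  simp [prefixProb, ← funext_iff]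

variable {q} (hq : IsPMF q)
include hq

theorem prefixProb_zero (u : Fin N → 𝒳) : prefixProb q u 0 = 1 := by
  simp [prefixProb, hq.2]

theorem le_prefixProb (u : Fin N → 𝒳) (k : ℕ) : q u ≤ prefixProb q u k := by
  have hsingle :=
    single_le_sum (f := fun x => if ∀ l : Fin N, (l : ℕ) < k → x l = u l then q x else 0)
      (fun x _ => ite_nonneg (hq.1 x) le_rfl) (mem_univ u)
  rwa [if_pos fun _ _ => rfl] at hsingle

theorem condProb_eq_div {u : Fin N → 𝒳} (hu : 0 < q u) (j : Fin N) :
    condProb q j u = prefixProb q u (j + 1) / prefixProb q u j := by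
  rw [condProb, if_neg, prefLE_eq_prefixProb, prefLT_eq_prefixProb]
  exact (prefLT_eq_prefixProb q j u ▸ hu.trans_le (le_prefixProb hq u j)).ne'

theorem condProb_pos {u : Fin N → 𝒳} (hu : 0 < q u) (j : Fin N) : 0 < condProb q j u := by
  rw [condProb_eq_div hq hu]
  exact div_pos (hu.trans_le (le_prefixProb hq u _)) (hu.trans_le (le_prefixProb hq u _))

theorem prod_condProb {u : Fin N → 𝒳} (hu : 0 < q u) : ∏ j, condProb q j u = q u := by
  have hne : ∀ k, prefixProb q u k ≠ 0 := fun k => (hu.trans_le (le_prefixProb hq u k)).ne'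
  rw [Fintype.prod_congr _ _ (condProb_eq_div hq hu),
    Fin.prod_univ_eq_prod_range (fun k => prefixProb q u (k + 1) / prefixProb q u k),
    prod_range_div_of_ne_zero _ hne, prefixProb_N, prefixProb_zero hq, div_one]

end ChainRule

section Encoder

variable {𝒳 : Type*} [Fintype 𝒳] [DecidableEq 𝒳] {N : ℕ} {q : (Fin N → 𝒳) → ℝ}

/-- The paper's `p̃`. -/
noncomputable def encoderPMF (q : (Fin N → 𝒳) → ℝ) (V : Finset (Fin N)) (u : Fin N → 𝒳) : ℝ :=
  ∏ j : Fin N, if j ∈ V then (Fintype.card 𝒳 : ℝ)⁻¹ else condProb q j u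

variable [Nonempty 𝒳] (hq : IsPMF q) (V : Finset (Fin N))
include hq

theorem encoderPMF_pos {u : Fin N → 𝒳} (hu : 0 < q u) : 0 < encoderPMF q V u :=
  prod_pos fun j _ => by
    split_ifs
    · positivity
    · exact condProb_pos hq hu j

theorem logb_div_encoderPMF {u : Fin N → 𝒳} (hu : 0 < q u) :
    Real.logb 2 (q u / encoderPMF q V u) =
      ∑ j ∈ V, (Real.logb 2 (Fintype.card 𝒳) + Real.logb 2 (condProb q j u)) := by
  have hcard : (0 : ℝ) < Fintype.card 𝒳 := mod_cast Fintype.card_pos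
  have hfactor : ∀ j, Real.logb 2 (condProb q j u) -
      Real.logb 2 (if j ∈ V then (Fintype.card 𝒳 : ℝ)⁻¹ else condProb q j u) =
      if j ∈ V then Real.logb 2 (Fintype.card 𝒳) + Real.logb 2 (condProb q j u) else 0 := by
    intro j
    split_ifs
    · rw [Real.logb_inv]; ring
    · exact sub_self _
  rw [Real.logb_div hu.ne' (encoderPMF_pos hq V hu).ne', ← prod_condProb hq hu, encoderPMF,
    Real.logb_prod _ _ fun j _ => (condProb_pos hq hu j).ne',
    Real.logb_prod _ _ fun j _ => by split_ifs <;> simp [hcard.ne', (condProb_pos hq hu j).ne'],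
    ← sum_sub_distrib, Fintype.sum_congr _ _ hfactor, sum_ite_mem, univ_inter]

theorem sum_mul_logb_div_encoderPMF :
    ∑ u, q u * Real.logb 2 (q u / encoderPMF q V u) =
      ∑ j ∈ V, (Real.logb 2 (Fintype.card 𝒳) - condEnt q j) := by
  have hpointwise : ∀ u, q u * Real.logb 2 (q u / encoderPMF q V u) =
      ∑ j ∈ V, (q u * Real.logb 2 (Fintype.card 𝒳) + q u * Real.logb 2 (condProb q j u)) := by
    intro u
    rcases (hq.1 u).eq_or_lt with hu | hu
    · simp [← hu]
    · rw [logb_div_encoderPMF hq V hu, mul_sum]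
      simp only [mul_add]
  rw [Fintype.sum_congr _ _ hpointwise, sum_comm]
  refine sum_congr rfl fun j _ => ?_
  rw [sum_add_distrib, ← sum_mul, hq.2, condEnt]
  ring

theorem klDiv_encoderPMF :
    klDiv q (encoderPMF q V) =
      ENNReal.ofReal (∑ j ∈ V, (Real.logb 2 (Fintype.card 𝒳) - condEnt q j)) := by
  rw [klDiv_eq_ofReal_s4 fun u hu => (encoderPMF_pos hq V ((hq.1 u).lt_of_ne' hu)).ne',
    sum_mul_logb_div_encoderPMF hq V]

end Encoder

theorem klDiv_resolvability_encoder_general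
    {𝒳 : Type*} [Fintype 𝒳] [DecidableEq 𝒳] [Nonempty 𝒳] {N : ℕ}
    (q : (Fin N → 𝒳) → ℝ) (hq : IsPMF q) (δ : ℝ) (hδ : 0 < δ)
    (V : Finset (Fin N))
    (hV : ∀ j ∈ V, Real.logb 2 (Fintype.card 𝒳) - δ < condEnt q j) :
    klDiv q (fun u => ∏ j : Fin N,
        if j ∈ V then (Fintype.card 𝒳 : ℝ)⁻¹ else condProb q j u) =
      ENNReal.ofReal
        (∑ j ∈ V, (Real.logb 2 (Fintype.card 𝒳) - condEnt q j)) ∧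
    ∑ j ∈ V, (Real.logb 2 (Fintype.card 𝒳) - condEnt q j) ≤ (V.card : ℝ) * δ ∧
    (V.card : ℝ) * δ ≤ (N : ℝ) * δ := by
  refine ⟨klDiv_encoderPMF hq V, ?_, ?_⟩
  · calc ∑ j ∈ V, (Real.logb 2 (Fintype.card 𝒳) - condEnt q j)
        ≤ ∑ _j ∈ V, δ := sum_le_sum fun j hj => by linarith [hV j hj]
      _ = V.card * δ := by rw [sum_const, nsmul_eq_mul]
  · have hcard : (V.card : ℝ) ≤ N := mod_cast (card_le_univ V).trans_eq (Fintype.card_fin N)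
    exact mul_le_mul_of_nonneg_right hcard hδ.le

/-- Core computation of Lemma 1: for the polar-encoder distribution `p̃` that
replaces the conditionals on `V` by the uniform distribution,
`D(q‖p̃) = ∑_{j∈V} (log₂|𝒳| − H(U^j|U^{1:j−1})) ≤ |V| δ ≤ N δ`. -/
theorem klDiv_resolvability_encoder
    {𝒳 : Type*} [Fintype 𝒳] [DecidableEq 𝒳] [Nonempty 𝒳] {N : ℕ} (hN : 1 ≤ N)
    (q : (Fin N → 𝒳) → ℝ) (hq : IsPMF q) (δ : ℝ) (hδ : 0 < δ)
    (V : Finset (Fin N))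
    (hV : ∀ j ∈ V, Real.logb 2 (Fintype.card 𝒳) - δ < condEnt q j) :
    klDiv q (fun u => ∏ j : Fin N,
        if j ∈ V then (Fintype.card 𝒳 : ℝ)⁻¹ else condProb q j u) =
      ENNReal.ofReal
        (∑ j ∈ V, (Real.logb 2 (Fintype.card 𝒳) - condEnt q j)) ∧
    ∑ j ∈ V, (Real.logb 2 (Fintype.card 𝒳) - condEnt q j) ≤ (V.card : ℝ) * δ ∧
    (V.card : ℝ) * δ ≤ (N : ℝ) * δ :=
  klDiv_resolvability_encoder_general q hq δ hδ V hV
end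

section
/- Let 𝒴 and 𝒮 be finite nonempty sets, N ≥ 1, and let q be a joint pmf of (T^{1:N}, V) on 𝒴^N × 𝒮. Let δ > 0 and let W ⊆ {1, …, N} be such that H(T^j | T^{1:j−1} V) > log₂|𝒴| − δ for every j ∈ W (conditional entropies under q). For each v ∈ 𝒮 define the conditional pmf p̃_{T^{1:N}|V=v}(t^{1:N}) = ∏_{j∈W} |𝒴|^{−1} · ∏_{j∉W} q_{T^j|T^{1:j−1}V}(t^j | t^{1:j−1}, v). Then ∑_{v∈𝒮} q_V(v) · D( q_{T^{1:N}|V=v} ‖ p̃_{T^{1:N}|V=v} ) ≤ |W| δ ≤ N δ. (Channel-simulation step established in the proof of Lemma 9 of the paper, Eq. (3), steps (e)–(h).) -/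
open scoped ENNReal BigOperators

attribute [local instance] Classical.propDecidable

/-- `V`-marginal of a joint pmf `q` of `(T^{1:N}, V)`. -/
noncomputable def margV {𝒴 𝒮 : Type*} [Fintype 𝒴] [Fintype 𝒮] {N : ℕ}
    (q : (Fin N → 𝒴) × 𝒮 → ℝ) (v : 𝒮) : ℝ :=
  ∑ t, q (t, v)

/-- Conditional pmf `q_{T^{1:N}|V=v}`, with the uniform distribution chosen
for conditioning values of probability zero. -/
noncomputable def condT {𝒴 𝒮 : Type*} [Fintype 𝒴] [Fintype 𝒮] {N : ℕ}
    (q : (Fin N → 𝒴) × 𝒮 → ℝ) (v : 𝒮) : (Fin N → 𝒴) → ℝ :=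
  fun t => if margV q v = 0 then (Fintype.card (Fin N → 𝒴) : ℝ)⁻¹
    else q (t, v) / margV q v

/-- Probability, under `q`, that the `T`-coordinates strictly before `j` agree
with `t` and the `V`-coordinate equals `v`. -/
noncomputable def prefLTTV {𝒴 𝒮 : Type*} [Fintype 𝒴] [Fintype 𝒮] [DecidableEq 𝒴] [DecidableEq 𝒮] {N : ℕ}
    (q : (Fin N → 𝒴) × 𝒮 → ℝ) (j : Fin N) (t : Fin N → 𝒴) (v : 𝒮) : ℝ :=
  ∑ z : (Fin N → 𝒴) × 𝒮, if (∀ l, l < j → z.1 l = t l) ∧ z.2 = v then q z else 0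

/-- Probability, under `q`, that the `T`-coordinates up to and including `j`
agree with `t` and the `V`-coordinate equals `v`. -/
noncomputable def prefLETV {𝒴 𝒮 : Type*} [Fintype 𝒴] [Fintype 𝒮] [DecidableEq 𝒴] [DecidableEq 𝒮] {N : ℕ}
    (q : (Fin N → 𝒴) × 𝒮 → ℝ) (j : Fin N) (t : Fin N → 𝒴) (v : 𝒮) : ℝ :=
  ∑ z : (Fin N → 𝒴) × 𝒮, if (∀ l, l ≤ j → z.1 l = t l) ∧ z.2 = v then q z else 0

/-- Conditional probability `q_{T^j|T^{1:j−1} V}(t^j|t^{1:j−1}, v)`, with the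
uniform distribution chosen for conditioning values of probability zero. -/
noncomputable def condProbTV {𝒴 𝒮 : Type*} [Fintype 𝒴] [Fintype 𝒮] [DecidableEq 𝒴] [DecidableEq 𝒮] {N : ℕ}
    (q : (Fin N → 𝒴) × 𝒮 → ℝ) (j : Fin N) (t : Fin N → 𝒴) (v : 𝒮) : ℝ :=
  if prefLTTV q j t v = 0 then (Fintype.card 𝒴 : ℝ)⁻¹
  else prefLETV q j t v / prefLTTV q j t v

/-- Conditional Shannon entropy `H(T^j | T^{1:j−1} V)` under `q`. -/
noncomputable def condEntTV {𝒴 𝒮 : Type*} [Fintype 𝒴] [Fintype 𝒮] [DecidableEq 𝒴] [DecidableEq 𝒮] {N : ℕ}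
    (q : (Fin N → 𝒴) × 𝒮 → ℝ) (j : Fin N) : ℝ :=
  -∑ z : (Fin N → 𝒴) × 𝒮, q z * Real.logb 2 (condProbTV q j z.1 z.2)

/-- The channel-simulation conditional pmf `p̃_{T^{1:N}|V=v}`: positions in `W`
are drawn uniformly, the others from the true conditionals given the past
`T`'s and `V = v`. -/
noncomputable def ptildeCond {𝒴 𝒮 : Type*} [Fintype 𝒴] [Fintype 𝒮] [DecidableEq 𝒴] [DecidableEq 𝒮] {N : ℕ}
    (q : (Fin N → 𝒴) × 𝒮 → ℝ) (W : Finset (Fin N)) (v : 𝒮) : (Fin N → 𝒴) → ℝ :=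
  fun t => ∏ j : Fin N,
    (if j ∈ W then (Fintype.card 𝒴 : ℝ)⁻¹ else condProbTV q j t v)

set_option linter.unusedSectionVars false
set_option linter.unusedVariables false

section Aux

variable {𝒴 𝒮 : Type*} [Fintype 𝒴] [Fintype 𝒮] [DecidableEq 𝒴] [DecidableEq 𝒮] {N : ℕ}

/-- Prefix probability with a natural-number cut. -/
noncomputable def Pfx (q : (Fin N → 𝒴) × 𝒮 → ℝ) (k : ℕ) (t : Fin N → 𝒴) (v : 𝒮) : ℝ :=
  ∑ z : (Fin N → 𝒴) × 𝒮, if (∀ l : Fin N, (l : ℕ) < k → z.1 l = t l) ∧ z.2 = v then q z else 0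

lemma Pfx_zero (q : (Fin N → 𝒴) × 𝒮 → ℝ) (t : Fin N → 𝒴) (v : 𝒮) :
    Pfx q 0 t v = margV q v := by
  unfold Pfx margV
  rw [Fintype.sum_prod_type]
  refine Finset.sum_congr rfl fun s _ => ?_
  simp

lemma Pfx_N (q : (Fin N → 𝒴) × 𝒮 → ℝ) (t : Fin N → 𝒴) (v : 𝒮) :
    Pfx q N t v = q (t, v) := by
  unfold Pfx
  have h : ∀ z : (Fin N → 𝒴) × 𝒮,
      ((∀ l : Fin N, (l : ℕ) < N → z.1 l = t l) ∧ z.2 = v) ↔ z = (t, v) := by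
    intro z
    constructor
    · rintro ⟨h1, h2⟩
      exact Prod.ext (funext fun l => h1 l l.isLt) h2
    · rintro rfl; exact ⟨fun l _ => rfl, rfl⟩
  simp only [h]
  simp

lemma Pfx_nonneg (q : (Fin N → 𝒴) × 𝒮 → ℝ) (hq : ∀ z, 0 ≤ q z) (k : ℕ)
    (t : Fin N → 𝒴) (v : 𝒮) : 0 ≤ Pfx q k t v := by
  refine Finset.sum_nonneg fun z _ => ?_
  split
  · exact hq z
  · exact le_rfl

lemma Pfx_antitone (q : (Fin N → 𝒴) × 𝒮 → ℝ) (hq : ∀ z, 0 ≤ q z) {k m : ℕ}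
    (hkm : k ≤ m) (t : Fin N → 𝒴) (v : 𝒮) : Pfx q m t v ≤ Pfx q k t v := by
  refine Finset.sum_le_sum fun z _ => ?_
  by_cases h : (∀ l : Fin N, (l : ℕ) < m → z.1 l = t l) ∧ z.2 = v
  · rw [if_pos h, if_pos ⟨fun l hl => h.1 l (lt_of_lt_of_le hl hkm), h.2⟩]
  · rw [if_neg h]
    split
    · exact hq z
    · exact le_rfl

lemma Pfx_congr (q : (Fin N → 𝒴) × 𝒮 → ℝ) (k : ℕ) {t t' : Fin N → 𝒴}
    (h : ∀ l : Fin N, (l : ℕ) < k → t l = t' l) (v : 𝒮) :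
    Pfx q k t v = Pfx q k t' v := by
  refine Finset.sum_congr rfl fun z _ => ?_
  congr 1
  simp only [eq_iff_iff, and_congr_left_iff]
  intro _
  constructor <;> intro hh l hl
  · rw [← h l hl]; exact hh l hl
  · rw [h l hl]; exact hh l hl

lemma prefLTTV_eq (q : (Fin N → 𝒴) × 𝒮 → ℝ) (j : Fin N) (t : Fin N → 𝒴) (v : 𝒮) :
    prefLTTV q j t v = Pfx q j t v := by
  refine Finset.sum_congr rfl fun z _ => if_congr ?_ rfl rfl
  exact and_congr_left' (forall_congr' fun l => by rw [Fin.lt_def])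

lemma prefLETV_eq (q : (Fin N → 𝒴) × 𝒮 → ℝ) (j : Fin N) (t : Fin N → 𝒴) (v : 𝒮) :
    prefLETV q j t v = Pfx q ((j : ℕ) + 1) t v := by
  refine Finset.sum_congr rfl fun z _ => if_congr ?_ rfl rfl
  exact and_congr_left' (forall_congr' fun l => by rw [Fin.le_def, ← Nat.lt_succ_iff])

/-- Summing the `(j+1)`-prefix over the `j`-th coordinate gives the `j`-prefix. -/
lemma sum_Pfx_update (q : (Fin N → 𝒴) × 𝒮 → ℝ) (j : Fin N) (t : Fin N → 𝒴) (v : 𝒮) :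
    ∑ y : 𝒴, Pfx q ((j : ℕ) + 1) (Function.update t j y) v = Pfx q j t v := by
  unfold Pfx
  rw [Finset.sum_comm]
  refine Finset.sum_congr rfl fun z _ => ?_
  have key : ∀ y : 𝒴,
      ((∀ l : Fin N, (l : ℕ) < (j : ℕ) + 1 → z.1 l = Function.update t j y l) ∧ z.2 = v) ↔
        (((∀ l : Fin N, (l : ℕ) < (j : ℕ) → z.1 l = t l) ∧ z.2 = v) ∧ z.1 j = y) := by
    intro y
    constructor
    · rintro ⟨h1, h2⟩
      refine ⟨⟨fun l hl => ?_, h2⟩, ?_⟩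
      · have := h1 l (Nat.lt_succ_of_lt hl)
        rwa [Function.update_of_ne (by exact fun he => absurd (he ▸ hl) (lt_irrefl _ : ¬ ((j:ℕ) < (j:ℕ))) )] at this
      · have := h1 j (Nat.lt_succ_self _)
        rwa [Function.update_self] at this
    · rintro ⟨⟨h1, h2⟩, h3⟩
      refine ⟨fun l hl => ?_, h2⟩
      rcases Nat.lt_succ_iff_lt_or_eq.mp hl with hl' | hl'
      · rw [Function.update_of_ne (by exact fun he => absurd ((Fin.val_eq_val l j).mpr he ▸ hl') (lt_irrefl _))]
        exact h1 l hl'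
      · have : l = j := Fin.ext hl'
        subst this
        rw [Function.update_self]
        exact h3
  simp only [key]
  by_cases hA : (∀ l : Fin N, (l : ℕ) < (j : ℕ) → z.1 l = t l) ∧ z.2 = v
  · rw [if_pos hA]
    have : ∀ y : 𝒴, (if ((∀ l : Fin N, (l : ℕ) < (j : ℕ) → z.1 l = t l) ∧ z.2 = v) ∧ z.1 j = y
        then q z else 0) = if z.1 j = y then q z else 0 := by
      intro y
      exact if_congr (Iff.intro (fun h => h.2) (fun h => ⟨hA, h⟩)) rfl rfl
    rw [Finset.sum_congr rfl fun y _ => this y]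
    rw [Finset.sum_ite_eq Finset.univ (z.1 j) (fun _ => q z)]
    simp
  · rw [if_neg hA]
    refine Finset.sum_eq_zero fun y _ => ?_
    rw [if_neg (by tauto)]

end Aux

section Aux2

variable {𝒴 𝒮 : Type*} [Fintype 𝒴] [Fintype 𝒮] [DecidableEq 𝒴] [DecidableEq 𝒮] {N : ℕ}

lemma card_Y_pos [Nonempty 𝒴] : (0:ℝ) < (Fintype.card 𝒴 : ℝ) := by
  exact_mod_cast Fintype.card_pos

lemma condProbTV_nonneg [Nonempty 𝒴] (q : (Fin N → 𝒴) × 𝒮 → ℝ) (hq : ∀ z, 0 ≤ q z)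
    (j : Fin N) (t : Fin N → 𝒴) (v : 𝒮) : 0 ≤ condProbTV q j t v := by
  unfold condProbTV
  split
  · positivity
  · rw [prefLETV_eq, prefLTTV_eq]
    exact div_nonneg (Pfx_nonneg q hq _ t v) (Pfx_nonneg q hq _ t v)

lemma condProbTV_congr (q : (Fin N → 𝒴) × 𝒮 → ℝ) (j : Fin N) {t t' : Fin N → 𝒴}
    (h : ∀ l, l ≤ j → t l = t' l) (v : 𝒮) :
    condProbTV q j t v = condProbTV q j t' v := by
  have h1 : Pfx q (j : ℕ) t v = Pfx q (j : ℕ) t' v :=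
    Pfx_congr q _ (fun l hl => h l (Fin.le_def.mpr (le_of_lt hl))) v
  have h2 : Pfx q ((j : ℕ) + 1) t v = Pfx q ((j : ℕ) + 1) t' v :=
    Pfx_congr q _ (fun l hl => h l (Fin.le_def.mpr (Nat.lt_succ_iff.mp hl))) v
  unfold condProbTV
  rw [prefLETV_eq, prefLTTV_eq, prefLETV_eq, prefLTTV_eq, h1, h2]

lemma sum_condProbTV_update [Nonempty 𝒴] (q : (Fin N → 𝒴) × 𝒮 → ℝ)
    (j : Fin N) (t : Fin N → 𝒴) (v : 𝒮) :
    ∑ y : 𝒴, condProbTV q j (Function.update t j y) v = 1 := by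
  have hP : ∀ y : 𝒴, prefLTTV q j (Function.update t j y) v = Pfx q (j : ℕ) t v := by
    intro y
    rw [prefLTTV_eq]
    exact Pfx_congr q _ (fun l hl => Function.update_of_ne
      (fun he => absurd (he ▸ hl) (lt_irrefl _)) _ _) v
  unfold condProbTV
  by_cases h0 : Pfx q (j : ℕ) t v = 0
  · have : ∀ y : 𝒴, (if prefLTTV q j (Function.update t j y) v = 0
        then (Fintype.card 𝒴 : ℝ)⁻¹
        else prefLETV q j (Function.update t j y) v / prefLTTV q j (Function.update t j y) v)
        = (Fintype.card 𝒴 : ℝ)⁻¹ := fun y => if_pos (by rw [hP y, h0])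
    rw [Finset.sum_congr rfl fun y _ => this y, Finset.sum_const, Finset.card_univ,
      nsmul_eq_mul]
    exact mul_inv_cancel₀ (ne_of_gt card_Y_pos)
  · have : ∀ y : 𝒴, (if prefLTTV q j (Function.update t j y) v = 0
        then (Fintype.card 𝒴 : ℝ)⁻¹
        else prefLETV q j (Function.update t j y) v / prefLTTV q j (Function.update t j y) v)
        = Pfx q ((j : ℕ) + 1) (Function.update t j y) v / Pfx q (j : ℕ) t v := by
      intro y
      rw [if_neg (by rw [hP y]; exact h0), prefLETV_eq, hP y]
    rw [Finset.sum_congr rfl fun y _ => this y, ← Finset.sum_div, sum_Pfx_update]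
    exact div_self h0

end Aux2

section Aux3

variable {𝒴 𝒮 : Type*} [Fintype 𝒴] [Fintype 𝒮] [DecidableEq 𝒴] [DecidableEq 𝒮] {N : ℕ}

lemma Pfx_pos_of_q_pos (q : (Fin N → 𝒴) × 𝒮 → ℝ) (hq : ∀ z, 0 ≤ q z)
    {t : Fin N → 𝒴} {v : 𝒮} (hpos : 0 < q (t, v)) {k : ℕ} (hk : k ≤ N) :
    0 < Pfx q k t v := by
  have h1 : Pfx q N t v ≤ Pfx q k t v := Pfx_antitone q hq hk t v
  rw [Pfx_N] at h1
  exact lt_of_lt_of_le hpos h1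

lemma condProbTV_pos [Nonempty 𝒴] (q : (Fin N → 𝒴) × 𝒮 → ℝ) (hq : ∀ z, 0 ≤ q z)
    {t : Fin N → 𝒴} {v : 𝒮} (hpos : 0 < q (t, v)) (j : Fin N) :
    0 < condProbTV q j t v := by
  unfold condProbTV
  split
  · exact inv_pos.mpr card_Y_pos
  · rw [prefLETV_eq, prefLTTV_eq]
    exact div_pos (Pfx_pos_of_q_pos q hq hpos j.isLt)
      (Pfx_pos_of_q_pos q hq hpos (le_of_lt j.isLt))

lemma prod_telescope (P : ℕ → ℝ) : ∀ n : ℕ, (∀ k, k ≤ n → P k ≠ 0) →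
    (∏ k ∈ Finset.range n, P (k + 1) / P k) = P n / P 0
  | 0, h => by simp [div_self (h 0 le_rfl)]
  | (n + 1), h => by
    rw [Finset.prod_range_succ, prod_telescope P n (fun k hk => h k (le_trans hk (Nat.le_succ n)))]
    have hn : P n ≠ 0 := h n (Nat.le_succ n)
    rw [div_mul_div_comm, mul_comm (P n) (P (n + 1)), mul_div_mul_right _ _ hn]

lemma chain_rule [Nonempty 𝒴] (q : (Fin N → 𝒴) × 𝒮 → ℝ) (hq : ∀ z, 0 ≤ q z)
    {t : Fin N → 𝒴} {v : 𝒮} (hpos : 0 < q (t, v)) :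
    (∏ j : Fin N, condProbTV q j t v) = q (t, v) / margV q v := by
  have hfac : ∀ j : Fin N, condProbTV q j t v
      = Pfx q ((j : ℕ) + 1) t v / Pfx q (j : ℕ) t v := by
    intro j
    unfold condProbTV
    have hne : prefLTTV q j t v ≠ 0 := by
      rw [prefLTTV_eq]
      exact ne_of_gt (Pfx_pos_of_q_pos q hq hpos (le_of_lt j.isLt))
    rw [if_neg hne, prefLETV_eq, prefLTTV_eq]
  have h1 : (∏ j : Fin N, condProbTV q j t v)
      = ∏ k ∈ Finset.range N, Pfx q (k + 1) t v / Pfx q k t v := by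
    rw [← Fin.prod_univ_eq_prod_range (fun k => Pfx q (k + 1) t v / Pfx q k t v) N]
    exact Finset.prod_congr rfl fun j _ => hfac j
  rw [h1, prod_telescope _ N (fun k hk => ne_of_gt (Pfx_pos_of_q_pos q hq hpos hk)),
    Pfx_N, Pfx_zero]

lemma margV_nonneg (q : (Fin N → 𝒴) × 𝒮 → ℝ) (hq : ∀ z, 0 ≤ q z) (v : 𝒮) :
    0 ≤ margV q v := Finset.sum_nonneg fun t _ => hq (t, v)

lemma q_le_margV (q : (Fin N → 𝒴) × 𝒮 → ℝ) (hq : ∀ z, 0 ≤ q z) (t : Fin N → 𝒴) (v : 𝒮) :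
    q (t, v) ≤ margV q v :=
  Finset.single_le_sum (fun t' _ => hq (t', v)) (Finset.mem_univ t)

lemma margV_pos_of_q_pos (q : (Fin N → 𝒴) × 𝒮 → ℝ) (hq : ∀ z, 0 ≤ q z)
    {t : Fin N → 𝒴} {v : 𝒮} (hpos : 0 < q (t, v)) : 0 < margV q v :=
  lt_of_lt_of_le hpos (q_le_margV q hq t v)

end Aux3

section Aux4

variable {𝒴 𝒮 : Type*} [Fintype 𝒴] [Fintype 𝒮] [DecidableEq 𝒴] [DecidableEq 𝒮] {N : ℕ}

lemma sum_sum_update (i : Fin N) (f : (Fin N → 𝒴) → ℝ) :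
    ∑ t : Fin N → 𝒴, ∑ y : 𝒴, f (Function.update t i y)
      = (Fintype.card 𝒴 : ℝ) * ∑ t : Fin N → 𝒴, f t := by
  have hinv : Function.Involutive
      (fun p : (Fin N → 𝒴) × 𝒴 => (Function.update p.1 i p.2, p.1 i)) := by
    intro p
    refine Prod.ext ?_ ?_
    · simp [Function.update_idem]
    · simp
  have hbij := hinv.bijective
  have hcomp : ∑ p : (Fin N → 𝒴) × 𝒴, f (Function.update p.1 i p.2)
      = ∑ p : (Fin N → 𝒴) × 𝒴, f p.1 := by
    have := Fintype.sum_bijective _ hbij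
      (fun p : (Fin N → 𝒴) × 𝒴 => f (Function.update p.1 i p.2))
      (fun p : (Fin N → 𝒴) × 𝒴 => f p.1) ?_
    · exact this
    · intro p
      simp [Function.update_idem]
  calc ∑ t : Fin N → 𝒴, ∑ y : 𝒴, f (Function.update t i y)
      = ∑ p : (Fin N → 𝒴) × 𝒴, f (Function.update p.1 i p.2) := by
        rw [Fintype.sum_prod_type]
    _ = ∑ p : (Fin N → 𝒴) × 𝒴, f p.1 := hcomp
    _ = ∑ t : Fin N → 𝒴, ∑ _y : 𝒴, f t := by rw [Fintype.sum_prod_type]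
    _ = (Fintype.card 𝒴 : ℝ) * ∑ t : Fin N → 𝒴, f t := by
        simp [Finset.sum_const, Finset.card_univ, nsmul_eq_mul, Finset.mul_sum]

lemma sum_prod_kernel [Nonempty 𝒴] (g : Fin N → (Fin N → 𝒴) → ℝ)
    (hdep : ∀ (j : Fin N) (t t' : Fin N → 𝒴), (∀ l, l ≤ j → t l = t' l) → g j t = g j t')
    (hker : ∀ (j : Fin N) (t : Fin N → 𝒴), ∑ y : 𝒴, g j (Function.update t j y) = 1) :
    ∑ t : Fin N → 𝒴, ∏ j : Fin N, g j t = 1 := by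
  have hcard : (0:ℝ) < (Fintype.card 𝒴 : ℝ) := card_Y_pos
  have main : ∀ k : ℕ, k ≤ N →
      ∑ t : Fin N → 𝒴, (∏ j ∈ Finset.univ.filter (fun j : Fin N => (j : ℕ) < k), g j t)
        = (Fintype.card 𝒴 : ℝ) ^ (N - k) := by
    intro k
    induction k with
    | zero =>
      intro _
      have : Finset.univ.filter (fun j : Fin N => (j : ℕ) < 0) = ∅ := by
        ext j; simp
      rw [this]
      simp only [Finset.prod_empty]
      rw [Finset.sum_const, Finset.card_univ, nsmul_eq_mul, mul_one, Nat.sub_zero,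
        Fintype.card_fun, Fintype.card_fin]
      push_cast
      ring
    | succ k ih =>
      intro hk1
      have hk : k < N := hk1
      have ihk := ih (le_of_lt hk)
      set i : Fin N := ⟨k, hk⟩ with hi
      have hfilter : Finset.univ.filter (fun j : Fin N => (j : ℕ) < k + 1)
          = insert i (Finset.univ.filter (fun j : Fin N => (j : ℕ) < k)) := by
        ext j
        simp only [Finset.mem_filter, Finset.mem_insert, Finset.mem_univ, true_and]
        rw [Nat.lt_succ_iff_lt_or_eq]
        constructor
        · rintro (h | h)
          · exact Or.inr h
          · exact Or.inl (Fin.ext h)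
        · rintro (h | h)
          · exact Or.inr (h ▸ rfl)
          · exact Or.inl h
      have hnotmem : i ∉ Finset.univ.filter (fun j : Fin N => (j : ℕ) < k) := by
        simp [hi]
      have key : (Fintype.card 𝒴 : ℝ) *
          ∑ t : Fin N → 𝒴, (∏ j ∈ Finset.univ.filter (fun j : Fin N => (j : ℕ) < k + 1), g j t)
          = (Fintype.card 𝒴 : ℝ) ^ (N - k) := by
        rw [← sum_sum_update i
          (fun t => ∏ j ∈ Finset.univ.filter (fun j : Fin N => (j : ℕ) < k + 1), g j t)]
        have inner : ∀ t : Fin N → 𝒴,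
            (∑ y : 𝒴, ∏ j ∈ Finset.univ.filter (fun j : Fin N => (j : ℕ) < k + 1),
              g j (Function.update t i y))
            = ∏ j ∈ Finset.univ.filter (fun j : Fin N => (j : ℕ) < k), g j t := by
          intro t
          have step : ∀ y : 𝒴,
              (∏ j ∈ Finset.univ.filter (fun j : Fin N => (j : ℕ) < k + 1),
                g j (Function.update t i y))
              = g i (Function.update t i y) *
                ∏ j ∈ Finset.univ.filter (fun j : Fin N => (j : ℕ) < k), g j t := by
            intro y
            rw [hfilter, Finset.prod_insert hnotmem]
            congr 1
            refine Finset.prod_congr rfl fun j hj => ?_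
            have hjk : (j : ℕ) < k := (Finset.mem_filter.mp hj).2
            refine hdep j _ _ fun l hl => ?_
            have hli : l ≠ i := by
              intro he
              have : (l : ℕ) < k := lt_of_le_of_lt hl hjk
              rw [he] at this
              exact absurd this (lt_irrefl k)
            exact Function.update_of_ne hli _ _
          rw [Finset.sum_congr rfl fun y _ => step y, ← Finset.sum_mul, hker i t, one_mul]
        rw [Finset.sum_congr rfl fun t _ => inner t]
        exact ihk
      have hNk : N - k = (N - (k + 1)) + 1 := by omega
      have hmul : (Fintype.card 𝒴 : ℝ) *
          (∑ t : Fin N → 𝒴, (∏ j ∈ Finset.univ.filter (fun j : Fin N => (j : ℕ) < k + 1), g j t))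
          = (Fintype.card 𝒴 : ℝ) * (Fintype.card 𝒴 : ℝ) ^ (N - (k + 1)) := by
        rw [key, hNk, pow_succ]
        ring
      exact mul_left_cancel₀ (ne_of_gt hcard) hmul

  have hfin : Finset.univ.filter (fun j : Fin N => (j : ℕ) < N) = Finset.univ := by
    ext j; simp [j.isLt]
  have := main N le_rfl
  rw [hfin, Nat.sub_self, pow_zero] at this
  exact this

end Aux4

section Aux5

variable {𝒴 𝒮 : Type*} [Fintype 𝒴] [Fintype 𝒮] [DecidableEq 𝒴] [DecidableEq 𝒮] {N : ℕ}

lemma ptildeCond_nonneg [Nonempty 𝒴] (q : (Fin N → 𝒴) × 𝒮 → ℝ) (hq : ∀ z, 0 ≤ q z)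
    (W : Finset (Fin N)) (v : 𝒮) (t : Fin N → 𝒴) : 0 ≤ ptildeCond q W v t := by
  refine Finset.prod_nonneg fun j _ => ?_
  split
  · exact le_of_lt (inv_pos.mpr card_Y_pos)
  · exact condProbTV_nonneg q hq j t v

lemma ptildeCond_pos [Nonempty 𝒴] (q : (Fin N → 𝒴) × 𝒮 → ℝ) (hq : ∀ z, 0 ≤ q z)
    (W : Finset (Fin N)) {t : Fin N → 𝒴} {v : 𝒮} (hpos : 0 < q (t, v)) :
    0 < ptildeCond q W v t := by
  refine Finset.prod_pos fun j _ => ?_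
  split
  · exact inv_pos.mpr card_Y_pos
  · exact condProbTV_pos q hq hpos j

lemma ptildeCond_sum_one [Nonempty 𝒴] (q : (Fin N → 𝒴) × 𝒮 → ℝ)
    (W : Finset (Fin N)) (v : 𝒮) : ∑ t : Fin N → 𝒴, ptildeCond q W v t = 1 := by
  refine sum_prod_kernel
    (fun j t => if j ∈ W then (Fintype.card 𝒴 : ℝ)⁻¹ else condProbTV q j t v) ?_ ?_
  · intro j t t' h
    by_cases hj : j ∈ W
    · simp [hj]
    · simp only [hj, if_false]
      exact condProbTV_congr q j h v
  · intro j t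
    by_cases hj : j ∈ W
    · simp only [hj, if_true]
      rw [Finset.sum_const, Finset.card_univ, nsmul_eq_mul]
      exact mul_inv_cancel₀ (ne_of_gt card_Y_pos)
    · simp only [hj, if_false]
      exact sum_condProbTV_update q j t v

lemma gibbs {α : Type*} [Fintype α] (p r : α → ℝ) (hp0 : ∀ x, 0 ≤ p x) (hp1 : ∑ x, p x = 1)
    (hr0 : ∀ x, 0 ≤ r x) (hr1 : ∑ x, r x = 1) (hac : ∀ x, r x = 0 → p x = 0) :
    0 ≤ ∑ x, p x * Real.logb 2 (p x / r x) := by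
  have key : ∑ x, p x * Real.log (r x / p x) ≤ 0 := by
    have hb : ∀ x, p x * Real.log (r x / p x) ≤ r x - p x := by
      intro x
      rcases eq_or_lt_of_le (hp0 x) with h | h
      · rw [← h]
        simpa using hr0 x
      · have hrx : 0 < r x := by
          rcases eq_or_lt_of_le (hr0 x) with h' | h'
          · exact absurd (hac x h'.symm) (ne_of_gt h)
          · exact h'
        have hlog := Real.log_le_sub_one_of_pos (div_pos hrx h)
        have := mul_le_mul_of_nonneg_left hlog (le_of_lt h)
        calc p x * Real.log (r x / p x) ≤ p x * (r x / p x - 1) := this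
          _ = r x - p x := by field_simp
    calc ∑ x, p x * Real.log (r x / p x) ≤ ∑ x, (r x - p x) :=
          Finset.sum_le_sum fun x _ => hb x
      _ = 0 := by rw [Finset.sum_sub_distrib, hp1, hr1, sub_self]
  have hneg : ∀ x, p x * Real.log (p x / r x) = -(p x * Real.log (r x / p x)) := by
    intro x
    rw [← inv_div (r x) (p x), Real.log_inv]
    ring
  have hlog : 0 ≤ ∑ x, p x * Real.log (p x / r x) := by
    rw [Finset.sum_congr rfl fun x _ => hneg x, Finset.sum_neg_distrib]
    linarith
  have hlogb : ∀ x, p x * Real.logb 2 (p x / r x)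
      = (p x * Real.log (p x / r x)) / Real.log 2 := by
    intro x
    rw [Real.logb]
    ring
  rw [Finset.sum_congr rfl fun x _ => hlogb x, ← Finset.sum_div]
  exact div_nonneg hlog (le_of_lt (Real.log_pos one_lt_two))

end Aux5

section Main

variable {𝒴 𝒮 : Type*} [Fintype 𝒴] [Fintype 𝒮] [DecidableEq 𝒴] [DecidableEq 𝒮] {N : ℕ}

lemma log_ratio_eq [Nonempty 𝒴] (q : (Fin N → 𝒴) × 𝒮 → ℝ) (hq0 : ∀ z, 0 ≤ q z)
    (W : Finset (Fin N)) {t : Fin N → 𝒴} {v : 𝒮} (hpos : 0 < q (t, v))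
    (hm : margV q v ≠ 0) :
    Real.logb 2 (condT q v t / ptildeCond q W v t)
      = ∑ j ∈ W, (Real.logb 2 (condProbTV q j t v) + Real.logb 2 (Fintype.card 𝒴)) := by
  have hcp_pos : ∀ j : Fin N, 0 < condProbTV q j t v := condProbTV_pos q hq0 hpos
  have hcT : condT q v t = ∏ j : Fin N, condProbTV q j t v := by
    unfold condT
    rw [if_neg hm, ← chain_rule q hq0 hpos]
  have hcT_pos : 0 < condT q v t := by
    rw [hcT]
    exact Finset.prod_pos fun j _ => hcp_pos j
  have hpt_pos : 0 < ptildeCond q W v t := ptildeCond_pos q hq0 W hpos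
  rw [Real.logb_div (ne_of_gt hcT_pos) (ne_of_gt hpt_pos)]
  have hA : Real.logb 2 (condT q v t) = ∑ j : Fin N, Real.logb 2 (condProbTV q j t v) := by
    rw [hcT]
    exact Real.logb_prod Finset.univ _ (fun j _ => ne_of_gt (hcp_pos j))
  have hB : Real.logb 2 (ptildeCond q W v t)
      = ∑ j : Fin N, Real.logb 2
          (if j ∈ W then (Fintype.card 𝒴 : ℝ)⁻¹ else condProbTV q j t v) := by
    unfold ptildeCond
    refine Real.logb_prod Finset.univ _ (fun j _ => ?_)
    split
    · exact ne_of_gt (inv_pos.mpr card_Y_pos)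
    · exact ne_of_gt (hcp_pos j)
  rw [hA, hB, ← Finset.sum_sub_distrib]
  have hpt : ∀ j : Fin N,
      Real.logb 2 (condProbTV q j t v)
        - Real.logb 2 (if j ∈ W then (Fintype.card 𝒴 : ℝ)⁻¹ else condProbTV q j t v)
      = if j ∈ W then Real.logb 2 (condProbTV q j t v) + Real.logb 2 (Fintype.card 𝒴)
        else 0 := by
    intro j
    by_cases hj : j ∈ W
    · simp only [hj, if_true]
      rw [Real.logb_inv]
      ring
    · simp only [hj, if_false, sub_self]
  rw [Finset.sum_congr rfl fun j _ => hpt j, Finset.sum_ite_mem, Finset.univ_inter]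

lemma per_v_term [Nonempty 𝒴] (q : (Fin N → 𝒴) × 𝒮 → ℝ) (hq0 : ∀ z, 0 ≤ q z)
    (W : Finset (Fin N)) (v : 𝒮) :
    ENNReal.ofReal (margV q v) * klDiv (condT q v) (ptildeCond q W v)
        = ENNReal.ofReal (∑ t : Fin N → 𝒴, q (t, v) *
            ∑ j ∈ W, (Real.logb 2 (condProbTV q j t v) + Real.logb 2 (Fintype.card 𝒴)))
      ∧ 0 ≤ ∑ t : Fin N → 𝒴, q (t, v) *
            ∑ j ∈ W, (Real.logb 2 (condProbTV q j t v) + Real.logb 2 (Fintype.card 𝒴)) := by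
  by_cases hm : margV q v = 0
  · have hqz : ∀ t : Fin N → 𝒴, q (t, v) = 0 := by
      intro t
      have := q_le_margV q hq0 t v
      rw [hm] at this
      exact le_antisymm this (hq0 (t, v))
    constructor
    · rw [hm]
      simp [hqz]
    · refine le_of_eq (Finset.sum_eq_zero fun t _ => ?_).symm
      rw [hqz t, zero_mul]
  · have hm' : 0 < margV q v := lt_of_le_of_ne (margV_nonneg q hq0 v) (Ne.symm hm)
    have hAC : ∀ x, ptildeCond q W v x = 0 → condT q v x = 0 := by
      intro x hx
      have hqx : q (x, v) = 0 := by
        by_contra hne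
        have : 0 < q (x, v) := lt_of_le_of_ne (hq0 (x, v)) (Ne.symm hne)
        exact absurd hx (ne_of_gt (ptildeCond_pos q hq0 W this))
      unfold condT
      rw [if_neg hm, hqx, zero_div]
    have hkl : klDiv (condT q v) (ptildeCond q W v)
        = ENNReal.ofReal (∑ t, condT q v t *
            Real.logb 2 (condT q v t / ptildeCond q W v t)) := by
      unfold klDiv
      rw [if_pos hAC]
    have hpmf_p : ∀ t, 0 ≤ condT q v t := by
      intro t
      unfold condT
      rw [if_neg hm]
      exact div_nonneg (hq0 (t, v)) (le_of_lt hm')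
    have hpmf_s : ∑ t, condT q v t = 1 := by
      have : ∀ t : Fin N → 𝒴, condT q v t = q (t, v) / margV q v := by
        intro t; unfold condT; rw [if_neg hm]
      rw [Finset.sum_congr rfl fun t _ => this t, ← Finset.sum_div]
      exact div_self hm
    have hD_nonneg : 0 ≤ ∑ t, condT q v t *
        Real.logb 2 (condT q v t / ptildeCond q W v t) :=
      gibbs _ _ hpmf_p hpmf_s (ptildeCond_nonneg q hq0 W v) (ptildeCond_sum_one q W v) hAC
    have hpoint : ∀ t : Fin N → 𝒴,
        margV q v * (condT q v t * Real.logb 2 (condT q v t / ptildeCond q W v t))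
        = q (t, v) * ∑ j ∈ W, (Real.logb 2 (condProbTV q j t v)
            + Real.logb 2 (Fintype.card 𝒴)) := by
      intro t
      rcases eq_or_lt_of_le (hq0 (t, v)) with h | h
      · have hct : condT q v t = 0 := by
          unfold condT; rw [if_neg hm, ← h, zero_div]
        rw [hct, ← h]
        ring
      · rw [log_ratio_eq q hq0 W h hm]
        have hct : condT q v t = q (t, v) / margV q v := by
          unfold condT; rw [if_neg hm]
        rw [hct]
        field_simp
    have heq : margV q v * (∑ t, condT q v t *
        Real.logb 2 (condT q v t / ptildeCond q W v t))
        = ∑ t : Fin N → 𝒴, q (t, v) *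
            ∑ j ∈ W, (Real.logb 2 (condProbTV q j t v) + Real.logb 2 (Fintype.card 𝒴)) := by
      rw [Finset.mul_sum]
      exact Finset.sum_congr rfl fun t _ => hpoint t
    constructor
    · rw [hkl, ← ENNReal.ofReal_mul (margV_nonneg q hq0 v), heq]
    · rw [← heq]
      exact mul_nonneg (le_of_lt hm') hD_nonneg

end Main

/-- Channel-simulation step from Eq. (3), steps (e)–(h), of Lemma 9:
`∑_v q_V(v) · D(q_{T^{1:N}|V=v} ‖ p̃_{T^{1:N}|V=v}) ≤ |W| δ ≤ N δ`. -/
theorem channel_simulation_klDiv_le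
    {𝒴 𝒮 : Type*} [Fintype 𝒴] [Fintype 𝒮] [DecidableEq 𝒴] [DecidableEq 𝒮]
    [Nonempty 𝒴] [Nonempty 𝒮] {N : ℕ} (hN : 1 ≤ N)
    (q : (Fin N → 𝒴) × 𝒮 → ℝ) (hq : IsPMF q) (δ : ℝ) (hδ : 0 < δ)
    (W : Finset (Fin N))
    (hW : ∀ j ∈ W, Real.logb 2 (Fintype.card 𝒴) - δ < condEntTV q j) :
    (∑ v : 𝒮, ENNReal.ofReal (margV q v) * klDiv (condT q v) (ptildeCond q W v)) ≤
        ENNReal.ofReal ((W.card : ℝ) * δ) ∧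
      (W.card : ℝ) * δ ≤ (N : ℝ) * δ := by
  obtain ⟨hq0, hq1⟩ := hq
  have hWN : W.card ≤ N := by
    have := Finset.card_le_univ W
    simpa using this
  refine ⟨?_, mul_le_mul_of_nonneg_right (by exact_mod_cast hWN) (le_of_lt hδ)⟩
  have hsum : (∑ v : 𝒮, ENNReal.ofReal (margV q v) * klDiv (condT q v) (ptildeCond q W v))
      = ENNReal.ofReal (∑ v : 𝒮, ∑ t : Fin N → 𝒴, q (t, v) *
          ∑ j ∈ W, (Real.logb 2 (condProbTV q j t v) + Real.logb 2 (Fintype.card 𝒴))) := by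
    rw [ENNReal.ofReal_sum_of_nonneg (fun v _ => (per_v_term q hq0 W v).2)]
    exact Finset.sum_congr rfl fun v _ => (per_v_term q hq0 W v).1
  rw [hsum]
  apply ENNReal.ofReal_le_ofReal
  have hswap : (∑ v : 𝒮, ∑ t : Fin N → 𝒴, q (t, v) *
        ∑ j ∈ W, (Real.logb 2 (condProbTV q j t v) + Real.logb 2 (Fintype.card 𝒴)))
      = ∑ z : (Fin N → 𝒴) × 𝒮, q z *
        ∑ j ∈ W, (Real.logb 2 (condProbTV q j z.1 z.2) + Real.logb 2 (Fintype.card 𝒴)) := by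
    rw [Fintype.sum_prod_type, Finset.sum_comm]
  rw [hswap]
  have hexch : (∑ z : (Fin N → 𝒴) × 𝒮, q z *
        ∑ j ∈ W, (Real.logb 2 (condProbTV q j z.1 z.2) + Real.logb 2 (Fintype.card 𝒴)))
      = ∑ j ∈ W, ∑ z : (Fin N → 𝒴) × 𝒮,
          q z * (Real.logb 2 (condProbTV q j z.1 z.2) + Real.logb 2 (Fintype.card 𝒴)) := by
    rw [Finset.sum_congr rfl fun z _ => Finset.mul_sum W _ (q z)]
    exact Finset.sum_comm
  rw [hexch]
  have hterm : ∀ j ∈ W, (∑ z : (Fin N → 𝒴) × 𝒮,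
      q z * (Real.logb 2 (condProbTV q j z.1 z.2) + Real.logb 2 (Fintype.card 𝒴))) ≤ δ := by
    intro j hj
    have hsplit : (∑ z : (Fin N → 𝒴) × 𝒮,
        q z * (Real.logb 2 (condProbTV q j z.1 z.2) + Real.logb 2 (Fintype.card 𝒴)))
        = (∑ z : (Fin N → 𝒴) × 𝒮, q z * Real.logb 2 (condProbTV q j z.1 z.2))
          + (∑ z : (Fin N → 𝒴) × 𝒮, q z) * Real.logb 2 (Fintype.card 𝒴) := by
      rw [Finset.sum_mul, ← Finset.sum_add_distrib]
      exact Finset.sum_congr rfl fun z _ => by ring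
    rw [hsplit, hq1, one_mul]
    have := hW j hj
    unfold condEntTV at this
    linarith
  calc (∑ j ∈ W, ∑ z : (Fin N → 𝒴) × 𝒮,
        q z * (Real.logb 2 (condProbTV q j z.1 z.2) + Real.logb 2 (Fintype.card 𝒴)))
      ≤ ∑ _j ∈ W, δ := Finset.sum_le_sum hterm
    _ = (W.card : ℝ) * δ := by rw [Finset.sum_const, nsmul_eq_mul]
end

section
/- Let 𝒳 and 𝒴 be finite nonempty sets, let q be a pmf on 𝒳 × 𝒴, let N ≥ 1, and let p̃ be any pmf on (𝒳 × 𝒴)^N. Let (X^{1:N}, Y^{1:N}) be distributed according to p̃ and let T_{X^{1:N} Y^{1:N}} be the joint histogram of the N pairs. Then for every ε > 0, P_{p̃}[ V( q, T_{X^{1:N} Y^{1:N}} ) > ε ] ≤ V( p̃, q^{⊗N} ) + 2 |𝒳| |𝒴| exp( − N ε² / (2 |𝒳|² |𝒴|²) ), where q^{⊗N} is the N-fold product of q. (Abstract form of Lemma 7 of the paper.) -/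
open scoped ENNReal BigOperators

attribute [local instance] Classical.propDecidable

/-- Variational distance between two pmfs. -/
noncomputable def varDist {α : Type*} [Fintype α] (p q : α → ℝ) : ℝ :=
  ∑ x, |p x - q x|

/-- Joint histogram (empirical distribution) of `N` samples. -/
noncomputable def empDist {α : Type*} [Fintype α] [DecidableEq α] {N : ℕ}
    (ω : Fin N → α) : α → ℝ :=
  fun a => (N : ℝ)⁻¹ * ∑ j, (if ω j = a then (1 : ℝ) else 0)

/-- Joint histogram (empirical distribution) of `kN` samples arranged in `k`
blocks of `N`. -/
noncomputable def empDistBlocks {α : Type*} [Fintype α] [DecidableEq α] {k N : ℕ}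
    (ω : Fin k → Fin N → α) : α → ℝ :=
  fun a => ((k * N : ℕ) : ℝ)⁻¹ * ∑ j : Fin k, ∑ i : Fin N, (if ω j i = a then (1 : ℝ) else 0)
/-!
Write `E` for the event `V(q, T) > ε`. Comparing `p̃` with `q^{⊗N}` pointwise gives
`P_{p̃}[E] ≤ V(p̃, q^{⊗N}) + P_{q^{⊗N}}[E]`, so it suffices to bound the i.i.d. probability.
If `V(q, T) > ε`, some letter `a` of the alphabet `𝒳 × 𝒴` has `|T(a) - q(a)| > δ := ε / |𝒳||𝒴|`,
and `N (T(a) - q(a))` is the sum of the `N` i.i.d. centred variables `1{x_j = a} - q(a) ∈ [-1, 1]`.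
Convexity of `exp` gives Hoeffding's bound `E e^{tY} ≤ cosh t ≤ e^{t²/2}` for each of them, so
Chernoff's method bounds each of the two tails by `exp(-N δ² / 2)`; a union bound over the
`2 |𝒳||𝒴|` tails finishes.
-/

open Real

section Probability

variable {α : Type*} [Fintype α]

theorem IsPMF.le_one {q : α → ℝ} (hq : IsPMF q) (a : α) : q a ≤ 1 :=
  hq.2 ▸ Finset.single_le_sum (fun x _ => hq.1 x) (Finset.mem_univ a)

noncomputable def probOf (p : α → ℝ) (S : α → Prop) : ℝ :=
  ∑ x, if S x then p x else 0

theorem probOf_eq_sum_ite (p : α → ℝ) (S : α → Prop) [DecidablePred S] :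
    probOf p S = ∑ x, if S x then p x else 0 := by
  unfold probOf
  congr!

theorem probOf_le_varDist_add (p Q : α → ℝ) (S : α → Prop) :
    probOf p S ≤ varDist p Q + probOf Q S := by
  rw [probOf, probOf, varDist, ← Finset.sum_add_distrib]
  refine Finset.sum_le_sum fun x _ => ?_
  split_ifs
  · linarith [le_abs_self (p x - Q x)]
  · simp

variable {p : α → ℝ}

theorem probOf_mono (hp : ∀ x, 0 ≤ p x) {S T : α → Prop} (h : ∀ x, S x → T x) :
    probOf p S ≤ probOf p T :=
  Finset.sum_le_sum fun x _ => by
    split_ifs with hS hT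
    · rfl
    · exact absurd (h x hS) hT
    · exact hp x
    · rfl

theorem probOf_or_le (hp : ∀ x, 0 ≤ p x) (S T : α → Prop) :
    probOf p (fun x => S x ∨ T x) ≤ probOf p S + probOf p T := by
  rw [probOf, probOf, probOf, ← Finset.sum_add_distrib]
  refine Finset.sum_le_sum fun x _ => ?_
  have := hp x
  split_ifs <;> simp_all

theorem probOf_exists_le_sum {ι : Type*} [Fintype ι] (hp : ∀ x, 0 ≤ p x) (S : ι → α → Prop) :
    probOf p (fun x => ∃ i, S i x) ≤ ∑ i, probOf p (S i) := by
  simp only [probOf]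
  rw [Finset.sum_comm]
  refine Finset.sum_le_sum fun x _ => ?_
  have hterm : ∀ i, 0 ≤ if S i x then p x else 0 := fun i => by split_ifs <;> simp [hp x]
  split_ifs with h
  · obtain ⟨i, hi⟩ := h
    calc p x = if S i x then p x else 0 := (if_pos hi).symm
      _ ≤ _ := Finset.single_le_sum (fun i _ => hterm i) (Finset.mem_univ i)
  · exact Finset.sum_nonneg fun i _ => hterm i

theorem probOf_le_sum_mul (hp : ∀ x, 0 ≤ p x) {S : α → Prop} {g : α → ℝ} (hg : ∀ x, 0 ≤ g x)
    (hS : ∀ x, S x → 1 ≤ g x) : probOf p S ≤ ∑ x, p x * g x :=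
  Finset.sum_le_sum fun x _ => by
    split_ifs with h
    · exact le_mul_of_one_le_right (hp x) (hS x h)
    · exact mul_nonneg (hp x) (hg x)

end Probability

theorem exists_div_card_lt_of_lt_sum {α : Type*} [Fintype α] {f : α → ℝ} {ε : ℝ} (hε : 0 ≤ ε)
    (h : ε < ∑ a, f a) : ∃ a, ε / Fintype.card α < f a := by
  have hconst : ∑ _a : α, ε / Fintype.card α ≤ ε := by
    rw [Finset.sum_const, Finset.card_univ, nsmul_eq_mul]
    rcases (Fintype.card α).eq_zero_or_pos with h0 | hpos
    · simp [h0, hε]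
    · rw [mul_div_cancel₀ _ (by positivity)]
  obtain ⟨a, -, ha⟩ := Finset.exists_lt_of_sum_lt (hconst.trans_lt h)
  exact ⟨a, ha⟩

section Hoeffding

variable {α : Type*}

noncomputable def iidPow (q : α → ℝ) (N : ℕ) : (Fin N → α) → ℝ :=
  fun ω => ∏ j, q (ω j)

theorem iidPow_nonneg {q : α → ℝ} (hq : ∀ x, 0 ≤ q x) (N : ℕ) (ω : Fin N → α) :
    0 ≤ iidPow q N ω :=
  Finset.prod_nonneg fun j _ => hq (ω j)

variable [Fintype α]

theorem sum_iidPow_mul_prod (q f : α → ℝ) (N : ℕ) :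
    ∑ ω, iidPow q N ω * ∏ j, f (ω j) = (∑ x, q x * f x) ^ N := by
  simp only [iidPow, ← Finset.prod_mul_distrib, Finset.sum_pow', Fintype.piFinset_univ]

theorem exp_mul_le_cosh_add_mul_sinh (t : ℝ) {y : ℝ} (hy : |y| ≤ 1) :
    exp (t * y) ≤ cosh t + y * sinh t := by
  obtain ⟨hy₁, hy₂⟩ := abs_le.mp hy
  -- `t * y` is the convex combination of `-t` and `t` with weights `(1 - y)/2` and `(1 + y)/2`
  have hconv := convexOn_exp.2 (Set.mem_univ (-t)) (Set.mem_univ t)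
    (by linarith : (0 : ℝ) ≤ (1 - y) / 2) (by linarith : (0 : ℝ) ≤ (1 + y) / 2) (by ring)
  simp only [smul_eq_mul] at hconv
  calc exp (t * y) = exp ((1 - y) / 2 * -t + (1 + y) / 2 * t) := by ring_nf
    _ ≤ (1 - y) / 2 * exp (-t) + (1 + y) / 2 * exp t := hconv
    _ = cosh t + y * sinh t := by rw [cosh_eq, sinh_eq]; ring

variable {q : α → ℝ} {Y : α → ℝ}

theorem IsPMF.sum_mul_exp_mul_le (hq : IsPMF q) (hY : ∀ x, |Y x| ≤ 1)
    (hm : ∑ x, q x * Y x = 0) (t : ℝ) :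
    ∑ x, q x * exp (t * Y x) ≤ exp (t ^ 2 / 2) :=
  calc ∑ x, q x * exp (t * Y x)
      ≤ ∑ x, q x * (cosh t + Y x * sinh t) :=
        Finset.sum_le_sum fun x _ =>
          mul_le_mul_of_nonneg_left (exp_mul_le_cosh_add_mul_sinh t (hY x)) (hq.1 x)
    _ = (∑ x, q x) * cosh t + (∑ x, q x * Y x) * sinh t := by
        simp only [Finset.sum_mul, ← Finset.sum_add_distrib]
        exact Finset.sum_congr rfl fun x _ => by ring
    _ = cosh t := by rw [hq.2, hm]; ring
    _ ≤ exp (t ^ 2 / 2) := cosh_le_exp_half_sq t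

theorem IsPMF.probOf_iidPow_lt_sum_le (hq : IsPMF q) (hY : ∀ x, |Y x| ≤ 1)
    (hm : ∑ x, q x * Y x = 0) (N : ℕ) {δ : ℝ} (hδ : 0 ≤ δ) :
    probOf (iidPow q N) (fun ω => N * δ < ∑ j, Y (ω j)) ≤ exp (-(N * δ ^ 2) / 2) := by
  have hmarkov : ∀ ω : Fin N → α, N * δ < ∑ j, Y (ω j) →
      1 ≤ exp (-(N * δ ^ 2)) * ∏ j, exp (δ * Y (ω j)) := by
    intro ω hω
    rw [← exp_sum, ← exp_add, ← Finset.mul_sum]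
    exact one_le_exp (by nlinarith)
  calc probOf (iidPow q N) (fun ω => N * δ < ∑ j, Y (ω j))
      ≤ ∑ ω, iidPow q N ω * (exp (-(N * δ ^ 2)) * ∏ j, exp (δ * Y (ω j))) :=
        probOf_le_sum_mul (iidPow_nonneg hq.1 N) (fun ω => by positivity) hmarkov
    _ = exp (-(N * δ ^ 2)) * (∑ x, q x * exp (δ * Y x)) ^ N := by
        rw [← sum_iidPow_mul_prod, Finset.mul_sum]
        exact Finset.sum_congr rfl fun ω _ => by ring
    _ ≤ exp (-(N * δ ^ 2)) * exp (δ ^ 2 / 2) ^ N := by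
        gcongr
        · exact Finset.sum_nonneg fun x _ => mul_nonneg (hq.1 x) (exp_nonneg _)
        · exact hq.sum_mul_exp_mul_le hY hm δ
    _ = exp (-(N * δ ^ 2) / 2) := by
        rw [← exp_nat_mul, ← exp_add]
        ring_nf

theorem IsPMF.probOf_iidPow_lt_abs_sum_le (hq : IsPMF q) (hY : ∀ x, |Y x| ≤ 1)
    (hm : ∑ x, q x * Y x = 0) (N : ℕ) {δ : ℝ} (hδ : 0 ≤ δ) :
    probOf (iidPow q N) (fun ω => N * δ < |∑ j, Y (ω j)|) ≤ 2 * exp (-(N * δ ^ 2) / 2) := by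
  have hY' : ∀ x, |-Y x| ≤ 1 := fun x => (abs_neg (Y x)).symm ▸ hY x
  have hm' : ∑ x, q x * -Y x = 0 := by simp only [mul_neg, Finset.sum_neg_distrib, hm, neg_zero]
  calc probOf (iidPow q N) (fun ω => N * δ < |∑ j, Y (ω j)|)
      ≤ probOf (iidPow q N) (fun ω => N * δ < ∑ j, Y (ω j) ∨ N * δ < ∑ j, -Y (ω j)) :=
        probOf_mono (iidPow_nonneg hq.1 N) fun ω h => by
          rwa [Finset.sum_neg_distrib, ← lt_abs]
    _ ≤ _ := probOf_or_le (iidPow_nonneg hq.1 N) _ _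
    _ ≤ exp (-(N * δ ^ 2) / 2) + exp (-(N * δ ^ 2) / 2) :=
        add_le_add (hq.probOf_iidPow_lt_sum_le hY hm N hδ)
          (hq.probOf_iidPow_lt_sum_le hY' hm' N hδ)
    _ = 2 * exp (-(N * δ ^ 2) / 2) := by ring

end Hoeffding

section Empirical

variable {α : Type*} [Fintype α] [DecidableEq α]

theorem sum_indicator_sub_eq_mul_empDist_sub {N : ℕ} (ω : Fin N → α) (a : α) (c : ℝ) :
    ∑ j, ((if ω j = a then 1 else 0) - c) = N * (empDist ω a - c) := by
  rcases N.eq_zero_or_pos with rfl | hN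
  · simp
  · simp only [empDist, Finset.sum_sub_distrib, Finset.sum_const, Finset.card_univ,
      Fintype.card_fin, nsmul_eq_mul, mul_sub, ← mul_assoc]
    rw [mul_inv_cancel₀ (by positivity), one_mul]

theorem IsPMF.probOf_iidPow_lt_abs_empDist_sub_le {q : α → ℝ} (hq : IsPMF q) {N : ℕ} (hN : 0 < N)
    {δ : ℝ} (hδ : 0 ≤ δ) (a : α) :
    probOf (iidPow q N) (fun ω => δ < |empDist ω a - q a|) ≤ 2 * exp (-(N * δ ^ 2) / 2) := by
  set Y : α → ℝ := fun x => (if x = a then 1 else 0) - q a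
  have hY : ∀ x, |Y x| ≤ 1 := fun x => by
    have := hq.1 a; have := hq.le_one a
    rw [abs_le]; simp only [Y]; split_ifs <;> constructor <;> linarith
  have hm : ∑ x, q x * Y x = 0 := by
    simp only [Y, mul_sub, mul_ite, mul_one, mul_zero, Finset.sum_sub_distrib,
      Finset.sum_ite_eq', Finset.mem_univ, if_true, ← Finset.sum_mul, hq.2]
    ring
  refine le_trans (probOf_mono (iidPow_nonneg hq.1 N) fun ω hω => ?_)
    (hq.probOf_iidPow_lt_abs_sum_le hY hm N hδ)
  rw [sum_indicator_sub_eq_mul_empDist_sub, abs_mul, Nat.abs_cast]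
  exact mul_lt_mul_of_pos_left hω (by positivity)

theorem IsPMF.probOf_iidPow_lt_varDist_empDist_le {q : α → ℝ} (hq : IsPMF q) {N : ℕ} (hN : 0 < N)
    {ε : ℝ} (hε : 0 ≤ ε) :
    probOf (iidPow q N) (fun ω => ε < varDist q (empDist ω)) ≤
      2 * Fintype.card α * exp (-(N * ε ^ 2) / (2 * Fintype.card α ^ 2)) := by
  set δ := ε / Fintype.card α
  calc probOf (iidPow q N) (fun ω => ε < varDist q (empDist ω))
      ≤ probOf (iidPow q N) (fun ω => ∃ a, δ < |empDist ω a - q a|) :=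
        probOf_mono (iidPow_nonneg hq.1 N) fun ω hω => by
          simpa only [abs_sub_comm] using exists_div_card_lt_of_lt_sum hε hω
    _ ≤ ∑ a, probOf (iidPow q N) (fun ω => δ < |empDist ω a - q a|) :=
        probOf_exists_le_sum (iidPow_nonneg hq.1 N) _
    _ ≤ ∑ _a : α, 2 * exp (-(N * δ ^ 2) / 2) :=
        Finset.sum_le_sum fun a _ => hq.probOf_iidPow_lt_abs_empDist_sub_le hN (by positivity) a
    _ = 2 * Fintype.card α * exp (-(N * ε ^ 2) / (2 * Fintype.card α ^ 2)) := by
        rw [Finset.sum_const, Finset.card_univ, nsmul_eq_mul, div_pow]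
        ring_nf

end Empirical

theorem empirical_coordination_block_general
    {𝒳 𝒴 : Type*} [Fintype 𝒳] [Fintype 𝒴]
    [DecidableEq 𝒳] [DecidableEq 𝒴] {N : ℕ} (hN : 1 ≤ N)
    (q : 𝒳 × 𝒴 → ℝ) (hq : IsPMF q)
    (ptilde : (Fin N → 𝒳 × 𝒴) → ℝ)
    (ε : ℝ) (hε : 0 < ε) :
    (∑ ω : Fin N → 𝒳 × 𝒴,
        if ε < varDist q (empDist ω) then ptilde ω else 0) ≤
      varDist ptilde (fun ω => ∏ j, q (ω j)) +
        2 * (Fintype.card 𝒳 : ℝ) * (Fintype.card 𝒴 : ℝ) *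
          Real.exp (-(N * ε ^ 2) /
            (2 * (Fintype.card 𝒳 : ℝ) ^ 2 * (Fintype.card 𝒴 : ℝ) ^ 2)) := by
  rw [← probOf_eq_sum_ite]
  calc _ ≤ varDist ptilde (iidPow q N) + probOf (iidPow q N) _ := probOf_le_varDist_add _ _ _
    _ ≤ _ := by
      refine add_le_add_right ?_ _
      convert hq.probOf_iidPow_lt_varDist_empDist_le hN hε.le using 1
      push_cast [Fintype.card_prod]
      ring_nf

/-- Abstract form of Lemma 7: for any pmf `p̃` on `(𝒳 × 𝒴)^N`,
`P_{p̃}[ V(q, T) > ε ] ≤ V(p̃, q^{⊗N}) + 2|𝒳||𝒴| exp(−Nε²/(2|𝒳|²|𝒴|²))`. -/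
theorem empirical_coordination_block
    {𝒳 𝒴 : Type*} [Fintype 𝒳] [Fintype 𝒴] [Nonempty 𝒳] [Nonempty 𝒴]
    [DecidableEq 𝒳] [DecidableEq 𝒴] {N : ℕ} (hN : 1 ≤ N)
    (q : 𝒳 × 𝒴 → ℝ) (hq : IsPMF q)
    (ptilde : (Fin N → 𝒳 × 𝒴) → ℝ) (hptilde : IsPMF ptilde)
    (ε : ℝ) (hε : 0 < ε) :
    (∑ ω : Fin N → 𝒳 × 𝒴,
        if ε < varDist q (empDist ω) then ptilde ω else 0) ≤
      varDist ptilde (fun ω => ∏ j, q (ω j)) +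
        2 * (Fintype.card 𝒳 : ℝ) * (Fintype.card 𝒴 : ℝ) *
          Real.exp (-(N * ε ^ 2) /
            (2 * (Fintype.card 𝒳 : ℝ) ^ 2 * (Fintype.card 𝒴 : ℝ) ^ 2)) :=
  empirical_coordination_block_general hN q hq ptilde ε hε
end
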